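/- arXiv:math/9908030 — 5 statements merged into one kernel-verified Lean document; each statement's English description precedes it below -/
import Mathlib

section
/- For every x ≥ 0, the sequence a_n = ∏_{i=1}^{⌊√n·x⌋+2} (n - ⌊√n·x⌋ - i)/(n + 3 - i) converges to exp(-x²) as n → ∞. -/
open Filter Topology Finset

/-!
Write `k = ⌊√n·x⌋₊`. The `i`-th factor equals `1 - (k + 3)/(n + 3 - i)`, and its denominator
runs between `n + 1 - k` and `n + 2`, so the product is squeezed between
`(1 - (k + 3)/(n + 1 - k))^(k + 2)` and `(1 - (k + 3)/(n + 2))^(k + 2)`. Both bounds have the form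
`(1 - u)^m` with `u → 0` and `m u ~ k²/n → x²`, hence tend to `exp (-x²)`.
-/

-- `1 - t⁻¹ ≤ log t ≤ t - 1` squeezes `m log (1 - u)` between two sequences tending to `-c`.
theorem tendsto_one_sub_pow_exp {α : Type*} {l : Filter α} {u : α → ℝ} {m : α → ℕ} {c : ℝ}
    (hu : Tendsto u l (𝓝 0)) (hmu : Tendsto (fun a => (m a : ℝ) * u a) l (𝓝 c)) :
    Tendsto (fun a => (1 - u a) ^ m a) l (𝓝 (Real.exp (-c))) := by
  have hu_lt : ∀ᶠ a in l, u a < 1 := hu.eventually_lt_const one_pos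
  have hlog : Tendsto (fun a => (m a : ℝ) * Real.log (1 - u a)) l (𝓝 (-c)) := by
    have hlower : Tendsto (fun a => (m a : ℝ) * (1 - (1 - u a)⁻¹)) l (𝓝 (-c)) := by
      have := hmu.neg.mul ((tendsto_const_nhds (x := (1 : ℝ))).sub hu |>.inv₀ (by norm_num))
      rw [sub_zero, inv_one, mul_one] at this
      refine this.congr' ?_
      filter_upwards [hu_lt] with a ha
      field_simp [(sub_pos.2 ha).ne']
      ring
    have hupper : Tendsto (fun a => (m a : ℝ) * (1 - u a - 1)) l (𝓝 (-c)) :=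
      hmu.neg.congr fun a => by ring
    refine tendsto_of_tendsto_of_tendsto_of_le_of_le' hlower hupper ?_ ?_ <;>
      filter_upwards [hu_lt] with a ha <;> gcongr
    · exact Real.one_sub_inv_le_log_of_pos (sub_pos.2 ha)
    · exact Real.log_le_sub_one_of_pos (sub_pos.2 ha)
  refine ((Real.continuous_exp.tendsto _).comp hlog).congr' ?_
  filter_upwards [hu_lt] with a ha
  rw [Function.comp_apply, ← Real.log_pow, Real.exp_log (pow_pos (sub_pos.2 ha) _)]

section ProductBounds

variable {n k i : ℕ}

theorem factor_eq_one_sub (hi : i ≤ k + 2) (hn : 2 * k + 2 ≤ n) :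
    ((n : ℝ) - k - i) / (n + 3 - i) = 1 - (k + 3) / (n + 3 - i) := by
  have hden : (n : ℝ) + 3 - i ≠ 0 := by
    have : (i : ℝ) ≤ k + 2 := by exact_mod_cast hi
    have : (2 * k + 2 : ℝ) ≤ n := by exact_mod_cast hn
    linarith
  field_simp
  ring

theorem one_sub_div_nonneg_of_two_mul_add_two_le (hn : 2 * k + 2 ≤ n) :
    0 ≤ 1 - ((k : ℝ) + 3) / (n + 1 - k) := by
  have : (2 * k + 2 : ℝ) ≤ n := by exact_mod_cast hn
  rw [sub_nonneg, div_le_one (by linarith)]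
  linarith

theorem factor_mem_Icc (hi : i ∈ Icc 1 (k + 2)) (hn : 2 * k + 2 ≤ n) :
    ((n : ℝ) - k - i) / (n + 3 - i) ∈
      Set.Icc (1 - ((k : ℝ) + 3) / (n + 1 - k)) (1 - ((k : ℝ) + 3) / (n + 2)) := by
  obtain ⟨hi1, hi2⟩ := mem_Icc.1 hi
  have hi1' : (1 : ℝ) ≤ i := by exact_mod_cast hi1
  have hi2' : (i : ℝ) ≤ k + 2 := by exact_mod_cast hi2
  have hn' : (2 * k + 2 : ℝ) ≤ n := by exact_mod_cast hn
  rw [factor_eq_one_sub hi2 hn]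
  constructor <;> gcongr 1 - (_ : ℝ) / ?_ <;> linarith

theorem pow_le_prod_factor (hn : 2 * k + 2 ≤ n) :
    (1 - ((k : ℝ) + 3) / (n + 1 - k)) ^ (k + 2) ≤
      ∏ i ∈ Icc 1 (k + 2), ((n : ℝ) - k - i) / (n + 3 - i) := by
  calc (1 - ((k : ℝ) + 3) / (n + 1 - k)) ^ (k + 2)
      = ∏ _i ∈ Icc 1 (k + 2), (1 - ((k : ℝ) + 3) / (n + 1 - k)) := by simp
    _ ≤ _ := prod_le_prod (fun _ _ => one_sub_div_nonneg_of_two_mul_add_two_le hn)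
        fun _ hi => (factor_mem_Icc hi hn).1

theorem prod_factor_le_pow (hn : 2 * k + 2 ≤ n) :
    ∏ i ∈ Icc 1 (k + 2), ((n : ℝ) - k - i) / (n + 3 - i) ≤
      (1 - ((k : ℝ) + 3) / (n + 2)) ^ (k + 2) := by
  calc ∏ i ∈ Icc 1 (k + 2), ((n : ℝ) - k - i) / (n + 3 - i)
      ≤ ∏ _i ∈ Icc 1 (k + 2), (1 - ((k : ℝ) + 3) / (n + 2)) :=
        prod_le_prod (fun _ hi => (one_sub_div_nonneg_of_two_mul_add_two_le hn).trans
          (factor_mem_Icc hi hn).1) fun _ hi => (factor_mem_Icc hi hn).2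
    _ = _ := by simp

end ProductBounds

theorem tendsto_sqrt_natCast_atTop : Tendsto (fun n : ℕ => √(n : ℝ)) atTop atTop :=
  Real.tendsto_sqrt_atTop.comp tendsto_natCast_atTop_atTop

theorem tendsto_inv_sqrt_natCast : Tendsto (fun n : ℕ => (√n)⁻¹) atTop (𝓝 0) :=
  tendsto_inv_atTop_zero.comp tendsto_sqrt_natCast_atTop

section Asymptotics

variable {k : ℕ → ℕ} {x : ℝ}

theorem tendsto_add_div_sqrt (hk : Tendsto (fun n => (k n : ℝ) / √n) atTop (𝓝 x)) (a : ℝ) :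
    Tendsto (fun n => ((k n : ℝ) + a) / √n) atTop (𝓝 x) := by
  have := hk.add (tendsto_inv_sqrt_natCast.const_mul a)
  rw [mul_zero, add_zero] at this
  exact this.congr fun n => by ring

theorem tendsto_div_natCast_of_tendsto_div_sqrt
    (hk : Tendsto (fun n => (k n : ℝ) / √n) atTop (𝓝 x)) :
    Tendsto (fun n => (k n : ℝ) / n) atTop (𝓝 0) := by
  have := hk.mul tendsto_inv_sqrt_natCast
  rw [mul_zero] at this
  refine this.congr fun n => ?_
  rw [← div_eq_mul_inv, div_div, Real.mul_self_sqrt n.cast_nonneg]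

theorem tendsto_natCast_div_add_sub (hk : Tendsto (fun n => (k n : ℝ) / n) atTop (𝓝 0)) (c : ℝ) :
    Tendsto (fun n : ℕ => (n : ℝ) / (n + c - k n)) atTop (𝓝 1) := by
  have h : Tendsto (fun n => 1 + c / n - (k n : ℝ) / n) atTop (𝓝 1) := by
    simpa using (tendsto_const_nhds.add (tendsto_const_div_atTop_nhds_zero_nat c)).sub hk
  refine (h.inv₀ one_ne_zero).congr' ?_ |>.trans (by rw [inv_one])
  filter_upwards [eventually_ne_atTop 0] with n hn
  field_simp

theorem eventually_two_mul_add_two_le (hk : Tendsto (fun n => (k n : ℝ) / n) atTop (𝓝 0)) :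
    ∀ᶠ n in atTop, 2 * k n + 2 ≤ n := by
  filter_upwards [hk.eventually_lt_const (by norm_num : (0 : ℝ) < 1 / 4),
    eventually_ge_atTop 4] with n hkn hn
  have : 4 * k n < n := by
    rw [div_lt_iff₀ (by positivity)] at hkn
    exact_mod_cast (by linarith : (4 * k n : ℝ) < n)
  omega

theorem tendsto_one_sub_div_pow_exp {d : ℕ → ℝ} (a : ℝ) (b : ℕ)
    (hk : Tendsto (fun n => (k n : ℝ) / √n) atTop (𝓝 x))
    (hd : Tendsto (fun n : ℕ => (n : ℝ) / d n) atTop (𝓝 1)) :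
    Tendsto (fun n => (1 - (k n + a) / d n) ^ (k n + b)) atTop (𝓝 (Real.exp (-x ^ 2))) := by
  have hsqrt : ∀ᶠ n : ℕ in atTop, √(n : ℝ) ≠ 0 := by
    filter_upwards [eventually_ne_atTop 0] with n hn
    positivity
  refine tendsto_one_sub_pow_exp ?_ ?_
  · have := ((tendsto_add_div_sqrt hk a).mul tendsto_inv_sqrt_natCast).mul hd
    rw [mul_zero, zero_mul] at this
    refine this.congr' ?_
    filter_upwards [hsqrt] with n hn
    field_simp
    rw [Real.sq_sqrt n.cast_nonneg]
  · have := ((tendsto_add_div_sqrt hk b).mul (tendsto_add_div_sqrt hk a)).mul hd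
    rw [mul_one, ← sq] at this
    refine this.congr' ?_
    filter_upwards [hsqrt] with n hn
    push_cast
    field_simp
    rw [Real.sq_sqrt n.cast_nonneg]
    ring

end Asymptotics

/-- For `x ≥ 0`, the product `∏_{i=1}^{⌊√n·x⌋+2} (n - ⌊√n·x⌋ - i)/(n + 3 - i)`
converges to `exp (-x²)` as `n → ∞`. -/
theorem prod_tendsto_exp (x : ℝ) (hx : 0 ≤ x) :
    Tendsto (fun n : ℕ =>
      ∏ i ∈ Finset.Icc 1 (⌊Real.sqrt n * x⌋₊ + 2),
        ((n : ℝ) - (⌊Real.sqrt n * x⌋₊ : ℝ) - (i : ℝ)) / ((n : ℝ) + 3 - (i : ℝ)))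
      atTop (nhds (Real.exp (-x ^ 2))) := by
  have hk : Tendsto (fun n : ℕ => (⌊√n * x⌋₊ : ℝ) / √n) atTop (𝓝 x) := by
    simpa only [mul_comm, Function.comp_def] using
      (tendsto_nat_floor_mul_div_atTop hx).comp tendsto_sqrt_natCast_atTop
  have hkn := tendsto_div_natCast_of_tendsto_div_sqrt hk
  refine tendsto_of_tendsto_of_tendsto_of_le_of_le'
    (tendsto_one_sub_div_pow_exp 3 2 hk (tendsto_natCast_div_add_sub hkn 1))
    (tendsto_one_sub_div_pow_exp 3 2 hk (tendsto_natCast_div_add_atTop 2)) ?_ ?_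
  · filter_upwards [eventually_two_mul_add_two_le hkn] with n hn using pow_le_prod_factor hn
  · filter_upwards [eventually_two_mul_add_two_le hkn] with n hn using prod_factor_le_pow hn
end

section
/- For every real x ≥ 0 and every natural n with ⌊√n·x⌋ + 2 ≤ n, the product ∏_{i=1}^{⌊√n·x⌋+2} (n - ⌊√n·x⌋ - i)/(n + 3 - i) is at most (1 - x/√n)^{√n·x}. -/
/-- For `x ≥ 0` and `n` with `x ≤ √n` and `⌊√n·x⌋ + 2 ≤ n`, the product
`∏_{i=1}^{⌊√n·x⌋+2} (n - ⌊√n·x⌋ - i)/(n + 3 - i)` is at most `(1 - x/√n)^(√n·x)`. -/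
theorem prod_le_one_sub_rpow (x : ℝ) (hx : 0 ≤ x) (n : ℕ) (hn : 0 < n)
    (hxn : x ≤ Real.sqrt n) (hfl : ⌊Real.sqrt n * x⌋₊ + 2 ≤ n) :
    ∏ i ∈ Finset.Icc 1 (⌊Real.sqrt n * x⌋₊ + 2),
      ((n : ℝ) - (⌊Real.sqrt n * x⌋₊ : ℝ) - (i : ℝ)) / ((n : ℝ) + 3 - (i : ℝ))
    ≤ (1 - x / Real.sqrt n) ^ (Real.sqrt n * x) := by
  set s := Real.sqrt n with hs
  set k := ⌊s * x⌋₊ with hk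
  have hs0 : 0 < s := Real.sqrt_pos.mpr (by positivity)
  have hss : s * s = (n : ℝ) := Real.mul_self_sqrt (by positivity)
  have hsx : s * x < (k : ℝ) + 1 := Nat.lt_floor_add_one _
  have hxs : x < s := by
    rcases lt_or_eq_of_le hxn with h | h
    · exact h
    · exfalso
      have h1 : s * x = (n : ℝ) := by rw [h]; exact hss
      have h2 : k = n := by rw [hk, h1, Nat.floor_natCast]
      omega
  have hc0 : 0 < 1 - x / s := by
    have : x / s < 1 := (div_lt_one hs0).mpr hxs
    linarith
  have hc1 : 1 - x / s ≤ 1 := by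
    have : 0 ≤ x / s := by positivity
    linarith
  by_cases hcase : n ≤ 2 * k + 2
  · -- there is a zero factor at i = n - k
    have hmem : n - k ∈ Finset.Icc 1 (k + 2) := by
      simp only [Finset.mem_Icc]; omega
    have hzero : ((n : ℝ) - (k : ℝ) - ((n - k : ℕ) : ℝ)) / ((n : ℝ) + 3 - ((n - k : ℕ) : ℝ)) = 0 := by
      have hnum : (n : ℝ) - (k : ℝ) - ((n - k : ℕ) : ℝ) = 0 := by
        rw [Nat.cast_sub (by omega)]; ring
      rw [hnum, zero_div]
    calc ∏ i ∈ Finset.Icc 1 (k + 2), ((n : ℝ) - (k : ℝ) - (i : ℝ)) / ((n : ℝ) + 3 - (i : ℝ))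
        = 0 := Finset.prod_eq_zero hmem hzero
      _ ≤ (1 - x / s) ^ (s * x) := Real.rpow_nonneg hc0.le _
  · -- all factors are nonnegative and ≤ 1 - x/s
    have hn2 : (2 * (k : ℝ) + 3) ≤ (n : ℝ) := by exact_mod_cast (by omega : 2 * k + 3 ≤ n)
    have key : ∀ i ∈ Finset.Icc 1 (k + 2),
        0 ≤ ((n : ℝ) - (k : ℝ) - (i : ℝ)) / ((n : ℝ) + 3 - (i : ℝ)) ∧
        ((n : ℝ) - (k : ℝ) - (i : ℝ)) / ((n : ℝ) + 3 - (i : ℝ)) ≤ 1 - x / s := by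
      intro i hi
      rw [Finset.mem_Icc] at hi
      have hi1 : (1 : ℝ) ≤ (i : ℝ) := by exact_mod_cast hi.1
      have hi2 : (i : ℝ) ≤ (k : ℝ) + 2 := by exact_mod_cast hi.2
      have hden : (0 : ℝ) < (n : ℝ) + 3 - (i : ℝ) := by linarith
      have hnum : (0 : ℝ) ≤ (n : ℝ) - (k : ℝ) - (i : ℝ) := by linarith
      refine ⟨div_nonneg hnum hden.le, ?_⟩
      have h1 : (x / s) * ((n : ℝ) + 3 - (i : ℝ)) ≤ (k : ℝ) + 3 := by
        rw [div_mul_eq_mul_div, div_le_iff₀ hs0]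
        have hA : s * (s * x) ≤ s * ((k : ℝ) + 1) := mul_le_mul_of_nonneg_left hsx.le hs0.le
        have hB : 0 ≤ x * ((i : ℝ) - 1) := mul_nonneg hx (by linarith)
        nlinarith [hA, hB, hss, hxs]
      rw [div_le_iff₀ hden, sub_mul, one_mul]
      linarith
    have hsx2 : s * x ≤ ((k : ℝ) + 2) := by linarith
    calc ∏ i ∈ Finset.Icc 1 (k + 2), ((n : ℝ) - (k : ℝ) - (i : ℝ)) / ((n : ℝ) + 3 - (i : ℝ))
        ≤ ∏ _i ∈ Finset.Icc 1 (k + 2), (1 - x / s) :=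
          Finset.prod_le_prod (fun i hi => (key i hi).1) (fun i hi => (key i hi).2)
      _ = (1 - x / s) ^ (k + 2) := by
          rw [Finset.prod_const, Nat.card_Icc]; norm_num
      _ = (1 - x / s) ^ (((k + 2 : ℕ) : ℝ)) := (Real.rpow_natCast _ _).symm
      _ ≤ (1 - x / s) ^ (s * x) :=
          Real.rpow_le_rpow_of_exponent_ge hc0 hc1 (by push_cast; linarith)
end

section
/- Let 0 < c and N be such that c/h(N) < 1, where h(N) = log N/log log N. Let Z be a random walk started at 0 whose i.i.d. steps take value 1 with probability c/h(N) and 0 otherwise, and fix K ≥ 2 and η > 0. Define S = inf{m > 0 : Z_{mK} − m ≥ (η + (K−1)/K)·h(N) or Z_{mK} − m ≤ −K}. Then for every ε > 0 there exists N₀ such that for all N ≥ N₀, P(Z_{SK} − S ≥ (η + (K−1)/K)·h(N)) ≤ N^{−(1 + ηK/(K−1) − ε)}. -/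
/-!
The stopping-time constraints can be dropped: the event is contained in the event that
`Z_{mK} - m ≥ a h(N)` for some `m ≥ 1`, where `a = η + (K-1)/K`. Since `Z_{mK} ≤ mK`, this
forces both `Z_{mK} ≥ m` and `Z_{mK} ≥ B h(N)` with `B = 1 + ηK/(K-1)`. A union bound over
the positions of the ones gives `P(Z_n ≥ k) ≤ 2^n p^k` for `p = c/h(N)`. The levels
`m ≤ M ≈ 4B h(N)` then contribute at most `M 2^{MK} p^{B h(N)} = N^{-B+o(1)}`, because
`h(N)^{h(N)} = N^{1-o(1)}` while `2^{O(h(N))} = N^{o(1)}`; the levels `m > M` form a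
geometric tail bounded by `(2^K p)^M ≤ h(N)^{-M/2}`, which is smaller still.
-/

open MeasureTheory ProbabilityTheory

noncomputable def h (x : ℝ) : ℝ := Real.log x / Real.log (Real.log x)

open Finset Filter
open scoped ENNReal

section Bernoulli

variable {Ω : Type*} [MeasurableSpace Ω] {P : Measure Ω} {ξ : ℕ → Ω → ℕ} {q : ℝ≥0∞}

lemma ae_forall_le_one_of_bernoulli [IsProbabilityMeasure P] (hξ : ∀ i, Measurable (ξ i))
    (hq : ∀ i, P {ω | ξ i ω = 1} = q ∧ P {ω | ξ i ω = 0} = 1 - q) :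
    ∀ᵐ ω ∂P, ∀ i, ξ i ω ≤ 1 := by
  refine ae_all_iff.2 fun i => ?_
  have hq1 : q ≤ 1 := (hq i).1 ▸ prob_le_one
  have hdisj : Disjoint {ω | ξ i ω = 0} {ω | ξ i ω = 1} :=
    Set.disjoint_left.2 fun ω h0 h1 => by simp_all
  have hunion : P {ω | ξ i ω = 0 ∨ ξ i ω = 1} = P Set.univ := by
    rw [Set.ofPred_or, measure_union hdisj (hξ i (measurableSet_singleton 1)), (hq i).1,
      (hq i).2, tsub_add_cancel_of_le hq1, measure_univ]
  have hmeas : MeasurableSet {ω | ξ i ω = 0 ∨ ξ i ω = 1} :=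
    (hξ i (measurableSet_singleton 0)).union (hξ i (measurableSet_singleton 1))
  filter_upwards [(ae_iff_measure_eq hmeas.nullMeasurableSet).2 hunion] with ω hω
  rcases hω with hω | hω <;> simp [hω]

lemma measure_sum_ge_le_choose_mul_pow (hind : iIndepFun ξ P)
    (hq : ∀ i, P {ω | ξ i ω = 1} = q) (h01 : ∀ᵐ ω ∂P, ∀ i, ξ i ω ≤ 1) (n k : ℕ) :
    P {ω | k ≤ ∑ i ∈ range n, ξ i ω} ≤ n.choose k * q ^ k := by
  have hcover : {ω | k ≤ ∑ i ∈ range n, ξ i ω} ≤ᵐ[P]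
      ⋃ T ∈ (range n).powersetCard k, ⋂ i ∈ T, {ω | ξ i ω = 1} := by
    filter_upwards [h01] with ω hω (hk : k ≤ _)
    have hsum : ∑ i ∈ range n, ξ i ω = #{i ∈ range n | ξ i ω = 1} := by
      rw [card_filter]
      refine sum_congr rfl fun i _ => ?_
      rcases Nat.le_one_iff_eq_zero_or_eq_one.1 (hω i) with h | h <;> simp [h]
    obtain ⟨T, hT, hcard⟩ := exists_subset_card_eq (hsum ▸ hk)
    exact Set.mem_iUnion₂.2 ⟨T, mem_powersetCard.2 ⟨hT.trans (filter_subset _ _), hcard⟩,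
      Set.mem_iInter₂.2 fun i hi => (mem_filter.1 (hT hi)).2⟩
  calc P {ω | k ≤ ∑ i ∈ range n, ξ i ω}
      ≤ ∑ T ∈ (range n).powersetCard k, P (⋂ i ∈ T, {ω | ξ i ω = 1}) :=
        (measure_mono_ae hcover).trans (measure_biUnion_finset_le _ _)
    _ = ∑ T ∈ (range n).powersetCard k, q ^ k := by
        refine sum_congr rfl fun T hT => ?_
        rw [hind.meas_biInter (s := fun i => {ω | ξ i ω = 1})
          fun i _ => ⟨{1}, measurableSet_singleton 1, rfl⟩, prod_congr rfl
          fun i _ => hq i, prod_const, (mem_powersetCard.1 hT).2]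
    _ = n.choose k * q ^ k := by rw [sum_const, card_powersetCard, card_range, nsmul_eq_mul]

lemma le_of_le_sub_of_le_mul {K s m η H : ℝ} (hK : 1 < K) (hs : s ≤ m * K)
    (h : (η + (K - 1) / K) * H ≤ s - m) : (1 + η * K / (K - 1)) * H ≤ s := by
  have hK0 : 0 < K - 1 := sub_pos.2 hK
  have hscale : (1 + η * K / (K - 1)) * H = (η + (K - 1) / K) * H * (K / (K - 1)) := by
    field_simp
    ring
  rw [hscale, ← le_div_iff₀ (by positivity), div_div_eq_mul_div]
  refine h.trans ?_
  rw [le_div_iff₀ (by positivity)]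
  nlinarith

lemma measure_le_two_pow_mul_pow_of_ae_le_sum (hind : iIndepFun ξ P)
    (hq : ∀ i, P {ω | ξ i ω = 1} = q) (h01 : ∀ᵐ ω ∂P, ∀ i, ξ i ω ≤ 1) {S : Set Ω} {n k : ℕ}
    (hS : ∀ᵐ ω ∂P, ω ∈ S → k ≤ ∑ i ∈ range n, ξ i ω) : P S ≤ 2 ^ n * q ^ k :=
  calc P S ≤ P {ω | k ≤ ∑ i ∈ range n, ξ i ω} := measure_mono_ae hS
    _ ≤ n.choose k * q ^ k := measure_sum_ge_le_choose_mul_pow hind hq h01 n k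
    _ ≤ 2 ^ n * q ^ k := by gcongr; exact_mod_cast Nat.choose_le_two_pow n k

lemma measure_walk_ge_le_pow (hind : iIndepFun ξ P) (hq : ∀ i, P {ω | ξ i ω = 1} = q)
    (h01 : ∀ᵐ ω ∂P, ∀ i, ξ i ω ≤ 1) (K : ℕ) {a : ℝ} (ha : 0 ≤ a) (m : ℕ) :
    P {ω | a ≤ ∑ i ∈ range (m * K), (ξ i ω : ℝ) - m} ≤ (2 ^ K * q) ^ m := by
  rw [mul_pow, ← pow_mul, mul_comm K]
  refine measure_le_two_pow_mul_pow_of_ae_le_sum hind hq h01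
    (.of_forall fun ω (hω : a ≤ _) => ?_)
  have : (m : ℝ) ≤ ∑ i ∈ range (m * K), (ξ i ω : ℝ) := by linarith
  exact_mod_cast this

lemma measure_walk_ge_le_two_pow_mul_pow_ceil (hind : iIndepFun ξ P)
    (hq : ∀ i, P {ω | ξ i ω = 1} = q) (h01 : ∀ᵐ ω ∂P, ∀ i, ξ i ω ≤ 1) {K : ℕ}
    (hK : 1 < (K : ℝ)) (η H : ℝ) (m : ℕ) :
    P {ω | (η + ((K : ℝ) - 1) / K) * H ≤ ∑ i ∈ range (m * K), (ξ i ω : ℝ) - m} ≤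
      2 ^ (m * K) * q ^ ⌈(1 + η * K / ((K : ℝ) - 1)) * H⌉₊ := by
  refine measure_le_two_pow_mul_pow_of_ae_le_sum hind hq h01 ?_
  filter_upwards [h01] with ω hω hup
  have hsum : ∑ i ∈ range (m * K), ξ i ω ≤ m * K :=
    (sum_le_sum fun i _ => hω i).trans (by simp)
  rw [← Nat.cast_sum] at hup
  exact Nat.ceil_le.2 (le_of_le_sub_of_le_mul hK (by exact_mod_cast hsum) hup)

end Bernoulli

lemma tsum_succ_le_mul_add_pow {f : ℕ → ℝ≥0∞} {A r : ℝ≥0∞} (M : ℕ) (hr : r ≤ 2⁻¹)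
    (hA : ∀ m ≤ M, f m ≤ A) (hf : ∀ m, f m ≤ r ^ m) : ∑' m, f (m + 1) ≤ M * A + r ^ M := by
  rw [← ENNReal.summable.sum_add_tsum_nat_add' (k := M)]
  gcongr
  · calc ∑ m ∈ range M, f (m + 1) ≤ ∑ _m ∈ range M, A :=
          sum_le_sum fun m hm => hA _ (mem_range.1 hm)
      _ = M * A := by rw [sum_const, card_range, nsmul_eq_mul]
  · calc ∑' m, f (m + M + 1) ≤ ∑' m, r ^ M * 2⁻¹ ^ (m + 1) := by
          refine ENNReal.tsum_le_tsum fun m => (hf _).trans ?_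
          rw [show m + M + 1 = M + (m + 1) by ring, pow_add]
          gcongr
      _ = r ^ M := by
          rw [ENNReal.tsum_mul_left, ENNReal.tsum_geometric_add_one, ENNReal.one_sub_inv_two,
            inv_inv, ENNReal.inv_mul_cancel (by norm_num) (by norm_num), mul_one]

lemma measure_exists_walk_ge_le {Ω : Type*} [MeasurableSpace Ω] {P : Measure Ω}
    {ξ : ℕ → Ω → ℕ} {K : ℕ} (hK : 1 < (K : ℝ)) {η H p : ℝ}
    (ha : 0 ≤ (η + ((K : ℝ) - 1) / K) * H) (hp : 0 ≤ p) (hr : 2 ^ K * p ≤ 2⁻¹)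
    (hind : iIndepFun ξ P) (hq : ∀ i, P {ω | ξ i ω = 1} = ENNReal.ofReal p)
    (h01 : ∀ᵐ ω ∂P, ∀ i, ξ i ω ≤ 1) (M : ℕ) :
    P {ω | ∃ m : ℕ, 0 < m ∧
        (η + ((K : ℝ) - 1) / K) * H ≤ ∑ i ∈ range (m * K), (ξ i ω : ℝ) - m} ≤
      ENNReal.ofReal (M * 2 ^ (M * K) * p ^ ⌈(1 + η * K / ((K : ℝ) - 1)) * H⌉₊ +
        (2 ^ K * p) ^ M) := by
  have hr' : 2 ^ K * ENNReal.ofReal p ≤ 2⁻¹ :=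
    calc 2 ^ K * ENNReal.ofReal p = ENNReal.ofReal (2 ^ K * p) := by
          rw [ENNReal.ofReal_mul (by positivity)]; simp
      _ ≤ ENNReal.ofReal 2⁻¹ := ENNReal.ofReal_le_ofReal hr
      _ = 2⁻¹ := by rw [ENNReal.ofReal_inv_of_pos two_pos, ENNReal.ofReal_ofNat]
  calc P _ ≤ ∑' m, P {ω | (η + ((K : ℝ) - 1) / K) * H ≤
          ∑ i ∈ range ((m + 1) * K), (ξ i ω : ℝ) - (m + 1 : ℕ)} := by
        refine (measure_mono fun ω hω => ?_).trans (measure_iUnion_le _)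
        obtain ⟨m, hm, hup⟩ := hω
        exact Set.mem_iUnion.2 ⟨m - 1, by rwa [Nat.sub_add_cancel hm]⟩
    _ ≤ M * (2 ^ (M * K) * ENNReal.ofReal p ^ ⌈(1 + η * K / ((K : ℝ) - 1)) * H⌉₊) +
          (2 ^ K * ENNReal.ofReal p) ^ M :=
        tsum_succ_le_mul_add_pow M hr'
          (fun m hm => (measure_walk_ge_le_two_pow_mul_pow_ceil hind hq h01 hK η H m).trans
            (by gcongr; norm_num))
          (measure_walk_ge_le_pow hind hq h01 K ha)
    _ = _ := by
        rw [ENNReal.ofReal_add (by positivity) (by positivity)]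
        simp [ENNReal.ofReal_mul, ENNReal.ofReal_pow, hp, mul_assoc,
          ENNReal.ofReal_pow (by positivity : 0 ≤ 2 ^ K * p)]

lemma h_mul_log_log {x : ℝ} (hx : Real.log (Real.log x) ≠ 0) :
    h x * Real.log (Real.log x) = Real.log x :=
  div_mul_cancel₀ _ hx

lemma log_h {x : ℝ} (hx : Real.log (Real.log x) ≠ 0) :
    Real.log (h x) = Real.log (Real.log x) - Real.log (Real.log (Real.log x)) := by
  have hL : Real.log x ≠ 0 := fun hL => hx (by rw [hL, Real.log_zero])
  exact Real.log_div hL hx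

lemma tendsto_h_atTop : Tendsto h atTop atTop := by
  have hL := Real.tendsto_log_atTop
  have hexp : Tendsto (fun y => Real.exp y / y) atTop atTop := by
    simpa using Real.tendsto_exp_div_pow_atTop 1
  refine (hexp.comp (Real.tendsto_log_atTop.comp hL)).congr' ?_
  filter_upwards [hL.eventually_gt_atTop 0] with x hx
  simp only [Function.comp_apply, h, Real.exp_log hx]

lemma eventually_mul_log_add_le (a b : ℝ) {ε : ℝ} (hε : 0 < ε) :
    ∀ᶠ y : ℝ in atTop, a * Real.log y + b ≤ ε * y := by
  have hbound := ((Real.isLittleO_log_id_atTop.const_mul_left a).add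
    (Asymptotics.isLittleO_const_id_atTop b)).bound hε
  filter_upwards [hbound, eventually_ge_atTop 0] with y hy hy0
  simpa [abs_of_nonneg hy0] using (le_abs_self _).trans hy

lemma natCast_mul_two_pow_mul_div_pow_le_exp {K M n : ℕ} {c B ε H ℓ : ℝ} (hc : 0 < c)
    (hH : 1 ≤ H) (hcH : c ≤ H) (hlogH : Real.log H = ℓ - Real.log ℓ)
    (hM : (M : ℝ) ≤ (4 * B + 1) * H) (hn : B * H ≤ n)
    (hℓ : B * Real.log ℓ + ((4 * B + 1) * (K + 1) * Real.log 2 + B * Real.log c + Real.log 2)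
      ≤ ε * ℓ) :
    M * 2 ^ (M * K) * (c / H) ^ n ≤ Real.exp (-(B - ε) * (H * ℓ)) / 2 := by
  have hlog2 : 0 < Real.log 2 := Real.log_pos one_lt_two
  have hlogcH : Real.log (c / H) = Real.log c - Real.log H := Real.log_div hc.ne' (by positivity)
  have hlogcH0 : Real.log (c / H) ≤ 0 :=
    Real.log_nonpos (by positivity) ((div_le_one (by positivity)).2 hcH)
  have hfactor : (M : ℝ) * 2 ^ (M * K) ≤ Real.exp ((4 * B + 1) * (K + 1) * Real.log 2 * H) :=
    calc (M : ℝ) * 2 ^ (M * K) ≤ 2 ^ M * 2 ^ (M * K) := by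
          gcongr; exact_mod_cast Nat.lt_two_pow_self.le
      _ = Real.exp (Real.log 2 * (M * (K + 1) : ℕ)) := by
          rw [← pow_add, ← Real.rpow_natCast, Real.rpow_def_of_pos two_pos]; ring_nf
      _ ≤ _ := Real.exp_le_exp.2 (by
          push_cast
          nlinarith [mul_le_mul_of_nonneg_right hM
            (by positivity : (0 : ℝ) ≤ (K + 1) * Real.log 2)])
  have hpow : (c / H) ^ n ≤ Real.exp (B * H * (Real.log c - Real.log H)) := by
    rw [← Real.rpow_natCast, Real.rpow_def_of_pos (by positivity), ← hlogcH]
    exact Real.exp_le_exp.2 (by nlinarith)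
  calc M * 2 ^ (M * K) * (c / H) ^ n
      ≤ Real.exp ((4 * B + 1) * (K + 1) * Real.log 2 * H) *
          Real.exp (B * H * (Real.log c - Real.log H)) := by gcongr
    _ ≤ Real.exp (-(B - ε) * (H * ℓ) - Real.log 2) := by
        rw [← Real.exp_add]
        refine Real.exp_le_exp.2 ?_
        rw [hlogH]
        nlinarith [mul_le_mul_of_nonneg_left hℓ (zero_le_one.trans hH)]
    _ = Real.exp (-(B - ε) * (H * ℓ)) / 2 := by rw [Real.exp_sub, Real.exp_log two_pos]

lemma two_pow_mul_div_pow_le_exp {K M : ℕ} {c B ε H ℓ : ℝ} (hc : 0 < c) (hB : 0 < B)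
    (hH : 1 ≤ H) (hcH : 2 * Real.log (2 ^ K * c) ≤ Real.log H) (hℓ : ℓ ≤ 2 * Real.log H)
    (hM : 4 * B * H ≤ M) (hε : Real.log 2 ≤ ε * (H * ℓ)) :
    (2 ^ K * (c / H)) ^ M ≤ Real.exp (-(B - ε) * (H * ℓ)) / 2 := by
  have hlogH : 0 ≤ Real.log H := Real.log_nonneg hH
  have hlogr : Real.log (2 ^ K * (c / H)) = Real.log (2 ^ K * c) - Real.log H := by
    rw [← mul_div_assoc, Real.log_div (by positivity) (by positivity)]
  rw [← Real.rpow_natCast, Real.rpow_def_of_pos (by positivity), hlogr, ← Real.exp_log two_pos,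
    ← Real.exp_sub, Real.exp_log two_pos]
  refine Real.exp_le_exp.2 ?_
  nlinarith [mul_le_mul_of_nonneg_right hM hlogH, mul_le_mul_of_nonneg_left hℓ
    (by positivity : 0 ≤ B * H)]

lemma eventually_walk_bound (K : ℕ) {c B ε : ℝ} (hc : 0 < c) (hB : 0 < B) (hε : 0 < ε) :
    ∀ᶠ x : ℝ in atTop, 2 ^ K * (c / h x) ≤ 2⁻¹ ∧ ∃ M : ℕ,
      M * 2 ^ (M * K) * (c / h x) ^ ⌈B * h x⌉₊ + (2 ^ K * (c / h x)) ^ M ≤ x ^ (-(B - ε)) := by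
  have hL := Real.tendsto_log_atTop
  have hℓ := Real.tendsto_log_atTop.comp hL
  filter_upwards [eventually_gt_atTop 0, hL.eventually_ge_atTop (Real.log 2 / ε),
    hℓ.eventually_gt_atTop 0, tendsto_h_atTop.eventually_ge_atTop (max 1 (2 ^ (K + 1) * c)),
    (Real.tendsto_log_atTop.comp tendsto_h_atTop).eventually_ge_atTop
      (2 * Real.log (2 ^ K * c)),
    hℓ.eventually (eventually_mul_log_add_le 1 0 one_half_pos),
    hℓ.eventually (eventually_mul_log_add_le B
      ((4 * B + 1) * (K + 1) * Real.log 2 + B * Real.log c + Real.log 2) hε)]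
    with x hx hxL hxℓ hxH hxlogH hxhalf hxC
  simp only [Function.comp_apply, max_le_iff] at hxℓ hxH hxlogH hxhalf hxC
  obtain ⟨hH1, hH2⟩ := hxH
  have hHℓ := h_mul_log_log hxℓ.ne'
  have hlogH := log_h hxℓ.ne'
  have hcH : c ≤ 2 ^ (K + 1) * c := le_mul_of_one_le_left hc.le (one_le_pow₀ one_le_two)
  have hB0 : 0 ≤ B * h x := by nlinarith
  refine ⟨?_, ⌈4 * B * h x⌉₊, ?_⟩
  · rw [mul_div_assoc', div_le_iff₀ (by linarith)]
    linarith [pow_succ (2 : ℝ) K ▸ hH2]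
  · rw [Real.rpow_def_of_pos hx, ← hHℓ, mul_comm (h x * _)]
    have hbulk := natCast_mul_two_pow_mul_div_pow_le_exp (K := K) (M := ⌈4 * B * h x⌉₊)
      (n := ⌈B * h x⌉₊) (ε := ε) hc hH1 (hcH.trans hH2) hlogH
      (by linarith [Nat.ceil_lt_add_one (by linarith : 0 ≤ 4 * B * h x)]) (Nat.le_ceil _) hxC
    have htail := two_pow_mul_div_pow_le_exp (K := K) (M := ⌈4 * B * h x⌉₊) (ε := ε)
      (ℓ := Real.log (Real.log x)) hc hB hH1 hxlogH (by linarith) (Nat.le_ceil _)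
      (by rw [hHℓ, ← div_le_iff₀' hε]; exact hxL)
    linarith

/-- Let `Z` be a random walk whose i.i.d. steps are `1` with probability `c/h(N)` and
`0` otherwise, `K ≥ 2`, `η > 0`, and let
`S = inf{m > 0 : Z_{mK} - m ≥ (η+(K-1)/K)h(N) or Z_{mK} - m ≤ -K}`.  For every
`ε > 0` and all sufficiently large `N`,
`P(Z_{SK} - S ≥ (η+(K-1)/K)h(N)) ≤ N^(-(1+ηK/(K-1)-ε))`.  (The event below states
that the first exit happens through the upper boundary.) -/
theorem random_walk_exit_estimate (K : ℕ) (hK : 2 ≤ K) (c η : ℝ) (hc : 0 < c)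
    (hη : 0 < η) :
    ∀ ε > (0 : ℝ), ∃ N₀ : ℕ, ∀ N : ℕ, N₀ ≤ N → c / h N < 1 →
    ∀ (Ω : Type) [MeasurableSpace Ω] (P : Measure Ω) [IsProbabilityMeasure P]
      (ξ : ℕ → Ω → ℕ), (∀ i, Measurable (ξ i)) →
    iIndepFun ξ P →
    (∀ i, P {ω | ξ i ω = 1} = ENNReal.ofReal (c / h N) ∧
      P {ω | ξ i ω = 0} = 1 - ENNReal.ofReal (c / h N)) →
    P {ω | ∃ m : ℕ, 0 < m ∧
        (∀ l : ℕ, 0 < l → l < m →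
          (-(K : ℝ) < (∑ i ∈ Finset.range (l * K), (ξ i ω : ℝ)) - l ∧
            (∑ i ∈ Finset.range (l * K), (ξ i ω : ℝ)) - l < (η + ((K : ℝ) - 1) / K) * h N)) ∧
        (η + ((K : ℝ) - 1) / K) * h N ≤ (∑ i ∈ Finset.range (m * K), (ξ i ω : ℝ)) - m} ≤
      ENNReal.ofReal ((N : ℝ) ^ (-(1 + η * K / ((K : ℝ) - 1) - ε))) := by
  intro ε hε
  have hK1 : (1 : ℝ) < K := by exact_mod_cast hK
  have hB : 0 < 1 + η * K / ((K : ℝ) - 1) := by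
    have := sub_pos.2 hK1
    positivity
  obtain ⟨N₀, hN₀⟩ := eventually_atTop.1 <| tendsto_natCast_atTop_atTop.eventually <|
    (tendsto_h_atTop.eventually_gt_atTop 0).and (eventually_walk_bound K hc hB hε)
  refine ⟨N₀, fun N hN _ Ω _ P _ ξ hξ hind hdist => ?_⟩
  obtain ⟨hH, hr, M, hM⟩ := hN₀ N hN
  have ha : 0 ≤ (η + ((K : ℝ) - 1) / K) * h N :=
    mul_nonneg (add_pos hη (div_pos (sub_pos.2 hK1) (by positivity))).le hH.le
  calc P _ ≤ P {ω | ∃ m : ℕ, 0 < m ∧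
        (η + ((K : ℝ) - 1) / K) * h N ≤ ∑ i ∈ range (m * K), (ξ i ω : ℝ) - m} :=
        measure_mono fun _ hω => by
          obtain ⟨m, hm, -, hup⟩ := hω
          exact ⟨m, hm, hup⟩
    _ ≤ _ := measure_exists_walk_ge_le hK1 ha (by positivity) hr hind (fun i => (hdist i).1)
        (ae_forall_le_one_of_bernoulli hξ hdist) M
    _ ≤ _ := ENNReal.ofReal_le_ofReal hM
end

section
/- Let K ≥ 2 be an integer and consider the annihilation–creation process A on ℤ with A_0 = {0}, where in each period K sites are added one at a time (each uniformly from the boundary of the current set) and then K−1 occupied sites are deleted one at a time (each uniformly from the current set). Let L_n be the number of unoccupied sites strictly between min A_n and max A_n. Then with probability 1, L_n ≥ K−2 eventually (for all sufficiently large n). -/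
open MeasureTheory Filter
open scoped ENNReal

/-- Boundary of a finite subset of `ℤ`: unoccupied sites adjacent to the set. -/
def bdryZ (a : Finset ℤ) : Finset ℤ := (a.image (· + 1) ∪ a.image (· - 1)) \ a

/-- One-step transition probability of the annihilation–creation model with
parameter `K`, at step `t` (each period consists of `2K-1` steps: first `K`
additions, uniform on the boundary, then `K-1` deletions, uniform on the set). -/
noncomputable def stepProb (K t : ℕ) (a b : Finset ℤ) : ℝ≥0∞ :=
  if t % (2 * K - 1) < K then
    (if ∃ y ∈ bdryZ a, b = insert y a then ((bdryZ a).card : ℝ≥0∞)⁻¹ else 0)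
  else
    (if ∃ y ∈ a, b = a.erase y then ((a.card : ℝ≥0∞))⁻¹ else 0)

/-- `L a`: the number of unoccupied sites strictly between the endpoints of `a`. -/
noncomputable def gapL (a : Finset ℤ) : ℕ :=
  ((Finset.Icc (a.min.untopD 0) (a.max.unbotD 0)).filter (fun x => x ∉ a)).card

/-! Only four sites of a set are *outer*: its two ends and their neighbours in the set. Deleting
any other site adds one gap site and leaves both extreme gaps unchanged, while deleting an outer
site loses at most the larger extreme gap. Hence the potential `gapSlack` (gap sites outside the
larger extreme gap) grows by one with every non-outer deletion, and a run of `K - 1` deletions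
containing at most one outer deletion ends with at least `K - 2` gap sites. In period `n` the
deletions are made from sets of at least `n + 3` sites, so two outer deletions in one period have
probability `O(K² / n²)`; by Borel–Cantelli this happens in only finitely many periods. -/

section

variable {Ω β : Type*} [MeasurableSpace Ω] [Countable β]

theorem measure_preimage_inter_le_of_fiber {μ : Measure Ω} {g : Ω → β}
    (hg : ∀ b, MeasurableSet (g ⁻¹' {b})) {S : Set Ω} {c : ℝ≥0∞}
    (h : ∀ b, μ (g ⁻¹' {b} ∩ S) ≤ c * μ (g ⁻¹' {b})) (Q : Set β) :
    μ (g ⁻¹' Q ∩ S) ≤ c * μ (g ⁻¹' Q) :=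
  calc μ (g ⁻¹' Q ∩ S) = μ (⋃ b ∈ Q, g ⁻¹' {b} ∩ S) := by
        rw [← Set.biUnion_preimage_singleton, Set.iUnion₂_inter]
    _ ≤ ∑' b : Q, μ (g ⁻¹' {(b : β)} ∩ S) := measure_biUnion_le μ Q.to_countable _
    _ ≤ ∑' b : Q, c * μ (g ⁻¹' {(b : β)}) := ENNReal.tsum_le_tsum fun b => h b
    _ = c * μ (g ⁻¹' Q) := by
        rw [ENNReal.tsum_mul_left, tsum_measure_preimage_singleton Q.to_countable fun b _ => hg b]

theorem tsum_inv_add_three_sq_ne_top : ∑' n : ℕ, (((n + 3 : ℕ) : ℝ≥0∞)⁻¹) ^ 2 ≠ ∞ := by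
  have hs : Summable fun n : ℕ => (((n + 3 : ℕ) : ℝ) ^ 2)⁻¹ :=
    (summable_nat_add_iff 3).2 (Real.summable_nat_pow_inv.2 one_lt_two)
  convert ENNReal.ofReal_ne_top using 1
  rw [ENNReal.ofReal_tsum_of_nonneg (fun n => by positivity) hs]
  congr with n
  rw [ENNReal.ofReal_inv_of_pos (by positivity), ENNReal.ofReal_pow (by positivity),
    ENNReal.ofReal_natCast, ENNReal.inv_pow]

end

namespace AnnihilationCreation

noncomputable def rightEnd (a : Finset ℤ) : ℤ := a.max.unbotD 0

noncomputable def leftEnd (a : Finset ℤ) : ℤ := a.min.untopD 0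

variable {a : Finset ℤ} {x y : ℤ}

theorem gapL_eq (a : Finset ℤ) :
    gapL a = ((Finset.Icc (leftEnd a) (rightEnd a)).filter (· ∉ a)).card := rfl

theorem rightEnd_eq_max' (h : a.Nonempty) : rightEnd a = a.max' h := by
  simp [rightEnd, ← Finset.coe_max' h]

theorem leftEnd_eq_min' (h : a.Nonempty) : leftEnd a = a.min' h := by
  simp [leftEnd, ← Finset.coe_min' h]

theorem rightEnd_mem (h : a.Nonempty) : rightEnd a ∈ a := by
  rw [rightEnd_eq_max' h]; exact a.max'_mem h

theorem leftEnd_mem (h : a.Nonempty) : leftEnd a ∈ a := by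
  rw [leftEnd_eq_min' h]; exact a.min'_mem h

theorem le_rightEnd (hx : x ∈ a) : x ≤ rightEnd a := by
  rw [rightEnd_eq_max' ⟨x, hx⟩]; exact a.le_max' x hx

theorem leftEnd_le (hx : x ∈ a) : leftEnd a ≤ x := by
  rw [leftEnd_eq_min' ⟨x, hx⟩]; exact a.min'_le x hx

theorem rightEnd_erase (hy : y ≠ rightEnd a) : rightEnd (a.erase y) = rightEnd a := by
  rcases a.eq_empty_or_nonempty with rfl | ha
  · simp
  have hmem : rightEnd a ∈ a.erase y := Finset.mem_erase.2 ⟨hy.symm, rightEnd_mem ha⟩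
  exact le_antisymm (le_rightEnd (Finset.mem_of_mem_erase (rightEnd_mem ⟨_, hmem⟩)))
    (le_rightEnd hmem)

theorem leftEnd_erase (hy : y ≠ leftEnd a) : leftEnd (a.erase y) = leftEnd a := by
  rcases a.eq_empty_or_nonempty with rfl | ha
  · simp
  have hmem : leftEnd a ∈ a.erase y := Finset.mem_erase.2 ⟨hy.symm, leftEnd_mem ha⟩
  exact le_antisymm (leftEnd_le hmem)
    (leftEnd_le (Finset.mem_of_mem_erase (leftEnd_mem ⟨_, hmem⟩)))

theorem gapL_erase (hy : y ∈ a) (hr : y ≠ rightEnd a) (hl : y ≠ leftEnd a) :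
    gapL (a.erase y) = gapL a + 1 := by
  have hIcc : y ∈ Finset.Icc (leftEnd a) (rightEnd a) :=
    Finset.mem_Icc.2 ⟨leftEnd_le hy, le_rightEnd hy⟩
  have hfilter : (Finset.Icc (leftEnd a) (rightEnd a)).filter (· ∉ a.erase y) =
      insert y ((Finset.Icc (leftEnd a) (rightEnd a)).filter (· ∉ a)) := by
    ext x
    by_cases hxy : x = y
    · subst hxy; simp [hIcc, hy]
    · simp [hxy]
  rw [gapL_eq, gapL_eq, rightEnd_erase hr, leftEnd_erase hl, hfilter,
    Finset.card_insert_of_notMem (by simp [hy])]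

/-- The width of the gap just below the right end, as the number of gap sites lost when that end
is removed (`0` if `a` has fewer than two points). -/
noncomputable def rightGap (a : Finset ℤ) : ℕ := gapL a - gapL (a.erase (rightEnd a))

noncomputable def leftGap (a : Finset ℤ) : ℕ := gapL a - gapL (a.erase (leftEnd a))

noncomputable def outerSites (a : Finset ℤ) : Finset ℤ :=
  {rightEnd a, leftEnd a, rightEnd (a.erase (rightEnd a)), leftEnd (a.erase (leftEnd a))}

theorem card_outerSites_le (a : Finset ℤ) : (outerSites a).card ≤ 4 := Finset.card_le_four

theorem ne_of_notMem_outerSites (h : y ∉ outerSites a) :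
    y ≠ rightEnd a ∧ y ≠ leftEnd a ∧ y ≠ rightEnd (a.erase (rightEnd a)) ∧
      y ≠ leftEnd (a.erase (leftEnd a)) := by
  simpa [outerSites, not_or] using h

theorem rightGap_erase (hy : y ∈ a) (ho : y ∉ outerSites a) :
    rightGap (a.erase y) = rightGap a := by
  obtain ⟨hr, hl, hr', -⟩ := ne_of_notMem_outerSites ho
  have hlr : leftEnd a ≠ rightEnd a := by
    have := leftEnd_le hy; have := le_rightEnd hy; omega
  have hl' : y ≠ leftEnd (a.erase (rightEnd a)) := by rwa [leftEnd_erase hlr.symm]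
  rw [rightGap, rightGap, rightEnd_erase hr, Finset.erase_right_comm,
    gapL_erase (Finset.mem_erase.2 ⟨hr, hy⟩) hr' hl', gapL_erase hy hr hl]
  omega

theorem leftGap_erase (hy : y ∈ a) (ho : y ∉ outerSites a) :
    leftGap (a.erase y) = leftGap a := by
  obtain ⟨hr, hl, -, hl'⟩ := ne_of_notMem_outerSites ho
  have hlr : leftEnd a ≠ rightEnd a := by
    have := leftEnd_le hy; have := le_rightEnd hy; omega
  have hr' : y ≠ rightEnd (a.erase (leftEnd a)) := by rwa [rightEnd_erase hlr]
  rw [leftGap, leftGap, leftEnd_erase hl, Finset.erase_right_comm,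
    gapL_erase (Finset.mem_erase.2 ⟨hl, hy⟩) hr' hl', gapL_erase hy hr hl]
  omega

noncomputable def gapSlack (a : Finset ℤ) : ℕ := gapL a - max (rightGap a) (leftGap a)

theorem gapSlack_le_gapL_erase (hy : y ∈ a) : gapSlack a ≤ gapL (a.erase y) := by
  unfold gapSlack
  by_cases hr : y = rightEnd a
  · subst hr; unfold rightGap; omega
  by_cases hl : y = leftEnd a
  · subst hl; unfold leftGap; omega
  rw [gapL_erase hy hr hl]; omega

theorem gapSlack_erase (hy : y ∈ a) (ho : y ∉ outerSites a) :
    gapSlack (a.erase y) = gapSlack a + 1 := by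
  obtain ⟨hr, hl, -⟩ := ne_of_notMem_outerSites ho
  unfold gapSlack
  rw [rightGap_erase hy ho, leftGap_erase hy ho, gapL_erase hy hr hl]
  have : rightGap a ≤ gapL a := Nat.sub_le _ _
  have : leftGap a ≤ gapL a := Nat.sub_le _ _
  omega

def IsOuterErasure (a b : Finset ℤ) : Prop := ∃ y ∈ outerSites a, b = a.erase y

theorem le_gapL_add_one_of_erasures {f : ℕ → Finset ℤ} {N : ℕ}
    (herase : ∀ i < N, ∃ y ∈ f i, f (i + 1) = (f i).erase y)
    (hunique : ∀ i < N, ∀ j < i,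
      ¬ (IsOuterErasure (f j) (f (j + 1)) ∧ IsOuterErasure (f i) (f (i + 1)))) :
    N ≤ gapL (f N) + 1 := by
  suffices ∀ j ≤ N, ((∀ i < j, ¬ IsOuterErasure (f i) (f (i + 1))) → j ≤ gapSlack (f j)) ∧
      j ≤ gapL (f j) + 1 from (this N le_rfl).2
  intro j hj
  induction j with
  | zero => simp
  | succ j ih =>
    obtain ⟨ihSlack, ihGap⟩ := ih (by omega)
    obtain ⟨y, hy, hfy⟩ := herase j (by omega)
    by_cases houter : IsOuterErasure (f j) (f (j + 1))
    · have hfirst : ∀ i < j, ¬ IsOuterErasure (f i) (f (i + 1)) :=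
        fun i hi hi' => hunique j (by omega) i hi ⟨hi', houter⟩
      have := gapSlack_le_gapL_erase hy
      rw [← hfy] at this
      exact ⟨fun h => absurd houter (h j (by omega)), by have := ihSlack hfirst; omega⟩
    · have ho : y ∉ outerSites (f j) := fun ho => houter ⟨y, ho, hfy⟩
      obtain ⟨hr, hl, -⟩ := ne_of_notMem_outerSites ho
      rw [hfy, gapSlack_erase hy ho, gapL_erase hy hr hl]
      exact ⟨fun h => by have := ihSlack (fun i hi => h i (by omega)); omega, by omega⟩

end AnnihilationCreation

namespace AnnihilationCreation

theorem exists_insert_of_stepProb_ne_zero {K t : ℕ} {a b : Finset ℤ} (ht : t % (2 * K - 1) < K)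
    (h : stepProb K t a b ≠ 0) : ∃ y ∈ bdryZ a, b = insert y a := by
  by_contra hb
  simp [stepProb, ht, hb] at h

theorem exists_erase_of_stepProb_ne_zero {K t : ℕ} {a b : Finset ℤ} (ht : ¬ t % (2 * K - 1) < K)
    (h : stepProb K t a b ≠ 0) : ∃ y ∈ a, b = a.erase y := by
  by_contra hb
  simp [stepProb, ht, hb] at h

theorem stepProb_le_inv_card {K t : ℕ} (ht : ¬ t % (2 * K - 1) < K) (a b : Finset ℤ) :
    stepProb K t a b ≤ (a.card : ℝ≥0∞)⁻¹ := by
  unfold stepProb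
  split_ifs <;> simp

def Admissible (K : ℕ) (x : ℕ → Finset ℤ) : Prop := ∀ t, stepProb K t (x t) (x (t + 1)) ≠ 0

def deletionStep (K n i : ℕ) : ℕ := n * (2 * K - 1) + K + i

theorem deletionStep_mod {K n i : ℕ} (hi : i < K - 1) :
    deletionStep K n i % (2 * K - 1) = K + i := by
  rw [deletionStep, add_assoc, Nat.mul_add_mod_of_lt (by omega)]

theorem deletionStep_sub_one {K n : ℕ} (hK : 1 ≤ K) :
    deletionStep K n (K - 1) = (n + 1) * (2 * K - 1) := by
  rw [deletionStep, add_mul]; omega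

namespace Admissible

variable {K : ℕ} {x : ℕ → Finset ℤ}

theorem card_period_add (hx : Admissible K x) (n : ℕ) {r : ℕ} (hr : r ≤ K) :
    (x (n * (2 * K - 1) + r)).card = (x (n * (2 * K - 1))).card + r := by
  induction r with
  | zero => rfl
  | succ r ih =>
    have ht : (n * (2 * K - 1) + r) % (2 * K - 1) < K := by
      rw [Nat.mul_add_mod_of_lt (by omega)]; omega
    obtain ⟨y, hy, hxy⟩ := exists_insert_of_stepProb_ne_zero ht (hx _)
    rw [← add_assoc, hxy, Finset.card_insert_of_notMem (Finset.mem_sdiff.1 hy).2, ih (by omega),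
      add_assoc]

theorem exists_erase (hx : Admissible K x) {n i : ℕ} (hi : i < K - 1) :
    ∃ y ∈ x (deletionStep K n i), x (deletionStep K n i + 1) = (x (deletionStep K n i)).erase y :=
  exists_erase_of_stepProb_ne_zero (by rw [deletionStep_mod hi]; omega) (hx _)

theorem card_deletionStep (hx : Admissible K x) (n : ℕ) {i : ℕ} (hi : i ≤ K - 1) :
    (x (deletionStep K n i)).card + i = (x (n * (2 * K - 1))).card + K := by
  induction i with
  | zero => exact hx.card_period_add n le_rfl
  | succ i ih =>
    obtain ⟨y, hy, hxy⟩ := hx.exists_erase (n := n) (by omega : i < K - 1)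
    have := Finset.card_erase_add_one hy
    rw [show deletionStep K n (i + 1) = deletionStep K n i + 1 from rfl, hxy]
    omega

theorem card_period (hx : Admissible K x) (hK : 1 ≤ K) (h0 : x 0 = {0}) (n : ℕ) :
    (x (n * (2 * K - 1))).card = n + 1 := by
  induction n with
  | zero => simp [h0]
  | succ n ih =>
    have := hx.card_deletionStep n (le_refl (K - 1))
    rw [deletionStep_sub_one hK] at this
    omega

end Admissible

variable {Ω : Type*}

def traj (X : ℕ → Ω → Finset ℤ) (t : ℕ) (ω : Ω) : Fin (t + 1) → Finset ℤ := fun i => X i ω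

variable {K : ℕ} {X : ℕ → Ω → Finset ℤ} {t : ℕ}

theorem traj_succ (ω : Ω) : traj X (t + 1) ω = Fin.snoc (traj X t ω) (X (t + 1) ω) := by
  funext i
  refine Fin.lastCases ?_ (fun j => ?_) i
  · rw [Fin.snoc_last]; rfl
  · rw [Fin.snoc_castSucc]; rfl

theorem traj_preimage_singleton {f : ℕ → Finset ℤ} {v : Fin (t + 1) → Finset ℤ}
    (hfv : ∀ i : Fin (t + 1), f i = v i) :
    traj X t ⁻¹' {v} = ⋂ s ∈ Finset.range (t + 1), {ω | X s ω = f s} := by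
  ext ω
  simp only [Set.mem_preimage, Set.mem_singleton_iff, Set.mem_iInter, Finset.mem_range]
  constructor
  · intro h s hs
    exact (congrFun h ⟨s, hs⟩).trans (hfv ⟨s, hs⟩).symm
  · intro h
    funext i
    exact (h i i.2).trans (hfv i)

def outerErasureAt (X : ℕ → Ω → Finset ℤ) (t : ℕ) : Set Ω :=
  {ω | IsOuterErasure (X t ω) (X (t + 1) ω)}

def doubleOuterErasure (X : ℕ → Ω → Finset ℤ) (K n : ℕ) : Set Ω :=
  ⋃ i ∈ Finset.range (K - 1), ⋃ j ∈ Finset.range i,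
    outerErasureAt X (deletionStep K n j) ∩ outerErasureAt X (deletionStep K n i)

theorem le_gapL_of_notMem_doubleOuterErasure (hK : 1 ≤ K) {ω : Ω} (hω : Admissible K (X · ω))
    {n : ℕ} (hn : ω ∉ doubleOuterErasure X K n) :
    K - 2 ≤ gapL (X ((n + 1) * (2 * K - 1)) ω) := by
  have := le_gapL_add_one_of_erasures (f := fun i => X (deletionStep K n i) ω) (N := K - 1)
    (fun i hi => hω.exists_erase hi)
    (fun i hi j hj hij => hn (Set.mem_biUnion (Finset.mem_range.2 hi)
      (Set.mem_biUnion (Finset.mem_range.2 hj) hij)))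
  rw [deletionStep_sub_one hK] at this
  omega

variable [MeasurableSpace Ω]

structure IsProcess (K : ℕ) (P : Measure Ω) (X : ℕ → Ω → Finset ℤ) : Prop where
  measurableSet_eq : ∀ t b, MeasurableSet {ω | X t ω = b}
  init : ∀ ω, X 0 ω = {0}
  measure_cylinder_succ : ∀ (f : ℕ → Finset ℤ) (t : ℕ),
    P (⋂ s ∈ Finset.range (t + 2), {ω | X s ω = f s}) =
      P (⋂ s ∈ Finset.range (t + 1), {ω | X s ω = f s}) * stepProb K t (f t) (f (t + 1))

variable {P : Measure Ω}

theorem IsProcess.measurableSet_traj_preimage (hX : IsProcess K P X)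
    (v : Fin (t + 1) → Finset ℤ) : MeasurableSet (traj X t ⁻¹' {v}) := by
  have : traj X t ⁻¹' {v} = ⋂ i : Fin (t + 1), {ω | X i ω = v i} := by
    ext ω; simp [traj, funext_iff]
  rw [this]
  exact MeasurableSet.iInter fun i => hX.measurableSet_eq i (v i)

theorem IsProcess.measure_traj_snoc (hX : IsProcess K P X) (v : Fin (t + 1) → Finset ℤ)
    (b : Finset ℤ) :
    P (traj X (t + 1) ⁻¹' {(Fin.snoc v b : Fin (t + 2) → Finset ℤ)}) =
      P (traj X t ⁻¹' {v}) * stepProb K t (v (Fin.last t)) b := by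
  set f : ℕ → Finset ℤ := fun s => if h : s < t + 1 then v ⟨s, h⟩ else b
  have hv : ∀ i : Fin (t + 1), f i = v i := fun i => dif_pos i.2
  have hsnoc : ∀ i : Fin (t + 2), f i = (Fin.snoc v b : Fin (t + 2) → Finset ℤ) i := by
    intro i
    refine Fin.lastCases ?_ (fun j => ?_) i
    · simp [f]
    · rw [Fin.snoc_castSucc, Fin.val_castSucc]; exact hv j
  rw [traj_preimage_singleton hsnoc, traj_preimage_singleton hv, hX.measure_cylinder_succ f t,
    ← hv (Fin.last t)]
  simp [f]

theorem IsProcess.ae_admissible (hX : IsProcess K P X) : ∀ᵐ ω ∂P, Admissible K (X · ω) := by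
  refine ae_all_iff.2 fun t => ?_
  have hnull (v : Fin (t + 1) → Finset ℤ) (b : Finset ℤ)
      (hb : stepProb K t (v (Fin.last t)) b = 0) :
      P (traj X (t + 1) ⁻¹' {(Fin.snoc v b : Fin (t + 2) → Finset ℤ)}) = 0 := by
    rw [hX.measure_traj_snoc, hb, mul_zero]
  refine measure_mono_null (fun ω hω => ?_)
    (measure_iUnion_null fun v => measure_iUnion_null fun b => measure_iUnion_null (hnull v b))
  exact Set.mem_iUnion₂.2 ⟨traj X t ω, X (t + 1) ω, Set.mem_iUnion.2 ⟨not_not.1 hω, traj_succ ω⟩⟩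

theorem IsProcess.measure_traj_inter_outerErasureAt_le (hX : IsProcess K P X) {m : ℕ}
    (ht : ¬ t % (2 * K - 1) < K) (hcard : ∀ᵐ ω ∂P, m ≤ (X t ω).card)
    (v : Fin (t + 1) → Finset ℤ) :
    P (traj X t ⁻¹' {v} ∩ outerErasureAt X t) ≤ 4 * (m : ℝ≥0∞)⁻¹ * P (traj X t ⁻¹' {v}) := by
  by_cases hv : P (traj X t ⁻¹' {v}) = 0
  · simp [measure_mono_null Set.inter_subset_left hv]
  set a := v (Fin.last t)
  have hm : m ≤ a.card := by
    rw [← measure_inter_conull hcard] at hv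
    obtain ⟨ω, hωv, hω⟩ := nonempty_of_measure_ne_zero hv
    have hXt : X t ω = a := congrFun hωv (Fin.last t)
    rwa [← hXt]
  have hsub : traj X t ⁻¹' {v} ∩ outerErasureAt X t ⊆
      ⋃ y ∈ outerSites a,
        traj X (t + 1) ⁻¹' {(Fin.snoc v (a.erase y) : Fin (t + 2) → Finset ℤ)} := by
    rintro ω ⟨hωv, y, hy, hωy⟩
    have hXt : X t ω = a := congrFun hωv (Fin.last t)
    rw [hXt] at hy hωy
    exact Set.mem_biUnion hy (by rw [Set.mem_preimage, traj_succ, hωv, hωy]; rfl)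
  calc P (traj X t ⁻¹' {v} ∩ outerErasureAt X t)
      ≤ ∑ y ∈ outerSites a,
          P (traj X (t + 1) ⁻¹' {(Fin.snoc v (a.erase y) : Fin (t + 2) → Finset ℤ)}) :=
        (measure_mono hsub).trans (measure_biUnion_finset_le _ _)
    _ ≤ ∑ _y ∈ outerSites a, (m : ℝ≥0∞)⁻¹ * P (traj X t ⁻¹' {v}) := by
        refine Finset.sum_le_sum fun y _ => ?_
        rw [hX.measure_traj_snoc, mul_comm]
        gcongr
        exact (stepProb_le_inv_card ht _ _).trans (ENNReal.inv_le_inv.2 (by exact_mod_cast hm))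
    _ ≤ 4 * (m : ℝ≥0∞)⁻¹ * P (traj X t ⁻¹' {v}) := by
        rw [Finset.sum_const, nsmul_eq_mul, mul_assoc]
        gcongr
        exact_mod_cast card_outerSites_le a

theorem IsProcess.measure_inter_outerErasureAt_deletionStep_le (hX : IsProcess K P X)
    (hK : 1 ≤ K) {n i : ℕ} (hi : i < K - 1) (Q : Set (Fin (deletionStep K n i + 1) → Finset ℤ)) :
    P (traj X _ ⁻¹' Q ∩ outerErasureAt X (deletionStep K n i)) ≤
      4 * ((n + 3 : ℕ) : ℝ≥0∞)⁻¹ * P (traj X _ ⁻¹' Q) := by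
  have hcard : ∀ᵐ ω ∂P, n + 3 ≤ (X (deletionStep K n i) ω).card := by
    filter_upwards [hX.ae_admissible] with ω hω
    have := hω.card_deletionStep n hi.le
    have := hω.card_period hK (hX.init ω) n
    omega
  exact measure_preimage_inter_le_of_fiber hX.measurableSet_traj_preimage
    (hX.measure_traj_inter_outerErasureAt_le (by rw [deletionStep_mod hi]; omega) hcard) Q

theorem IsProcess.measure_outerErasureAt_inter_le [IsProbabilityMeasure P]
    (hX : IsProcess K P X) (hK : 1 ≤ K) {n i j : ℕ} (hji : j < i) (hi : i < K - 1) :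
    P (outerErasureAt X (deletionStep K n j) ∩ outerErasureAt X (deletionStep K n i)) ≤
      (4 * ((n + 3 : ℕ) : ℝ≥0∞)⁻¹) ^ 2 := by
  have hj : deletionStep K n j + 1 < deletionStep K n i + 1 := by unfold deletionStep; omega
  have hfirst : outerErasureAt X (deletionStep K n j) = traj X (deletionStep K n i) ⁻¹'
      {v | IsOuterErasure (v ⟨_, hj.trans' (Nat.lt_succ_self _)⟩) (v ⟨_, hj⟩)} := rfl
  have hsingle :=
    hX.measure_inter_outerErasureAt_deletionStep_le hK (n := n) (hji.trans hi) Set.univ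
  rw [Set.preimage_univ, Set.univ_inter, measure_univ, mul_one] at hsingle
  calc P (outerErasureAt X (deletionStep K n j) ∩ outerErasureAt X (deletionStep K n i))
      ≤ 4 * ((n + 3 : ℕ) : ℝ≥0∞)⁻¹ * P (outerErasureAt X (deletionStep K n j)) := by
        rw [hfirst]; exact hX.measure_inter_outerErasureAt_deletionStep_le hK hi _
    _ ≤ (4 * ((n + 3 : ℕ) : ℝ≥0∞)⁻¹) ^ 2 := by rw [sq]; gcongr

theorem IsProcess.measure_doubleOuterErasure_le [IsProbabilityMeasure P]
    (hX : IsProcess K P X) (hK : 1 ≤ K) (n : ℕ) :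
    P (doubleOuterErasure X K n) ≤
      ((K - 1 : ℕ) : ℝ≥0∞) ^ 2 * 16 * (((n + 3 : ℕ) : ℝ≥0∞)⁻¹) ^ 2 := by
  calc P (doubleOuterErasure X K n)
      ≤ ∑ i ∈ Finset.range (K - 1), ∑ j ∈ Finset.range i,
          P (outerErasureAt X (deletionStep K n j) ∩ outerErasureAt X (deletionStep K n i)) :=
        (measure_biUnion_finset_le _ _).trans
          (Finset.sum_le_sum fun i _ => measure_biUnion_finset_le _ _)
    _ ≤ ∑ _i ∈ Finset.range (K - 1), ∑ _j ∈ Finset.range (K - 1),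
          (4 * ((n + 3 : ℕ) : ℝ≥0∞)⁻¹) ^ 2 := by
        refine Finset.sum_le_sum fun i hi => ?_
        rw [Finset.mem_range] at hi
        refine (Finset.sum_le_sum fun j hj => ?_).trans
          (Finset.sum_le_sum_of_subset (Finset.range_subset_range.2 hi.le))
        exact hX.measure_outerErasureAt_inter_le hK (Finset.mem_range.1 hj) hi
    _ = ((K - 1 : ℕ) : ℝ≥0∞) ^ 2 * 16 * (((n + 3 : ℕ) : ℝ≥0∞)⁻¹) ^ 2 := by
        simp only [Finset.sum_const, Finset.card_range, nsmul_eq_mul]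
        ring

end AnnihilationCreation

open AnnihilationCreation

/-- In the annihilation–creation model with parameter `K ≥ 2` started from `{0}`,
almost surely `L(A_n) ≥ K - 2` for all sufficiently large `n`.  Here `X` is the
step-by-step process (with `2K-1` steps per period) and `A n = X (n·(2K-1))`. -/
theorem gapL_ge_eventually (K : ℕ) (hK : 2 ≤ K)
    {Ω : Type*} [MeasurableSpace Ω] (P : Measure Ω) [IsProbabilityMeasure P]
    (X : ℕ → Ω → Finset ℤ)
    (hmeas : ∀ t b, MeasurableSet {ω | X t ω = b})
    (h0 : ∀ ω, X 0 ω = ({0} : Finset ℤ))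
    (hstep : ∀ (f : ℕ → Finset ℤ) (t : ℕ),
      P (⋂ s ∈ Finset.range (t + 2), {ω | X s ω = f s}) =
        P (⋂ s ∈ Finset.range (t + 1), {ω | X s ω = f s}) *
          stepProb K t (f t) (f (t + 1))) :
    P {ω | ∀ᶠ n in atTop, K - 2 ≤ gapL (X (n * (2 * K - 1)) ω)} = 1 := by
  have hX : IsProcess K P X := ⟨hmeas, h0, hstep⟩
  have hK1 : 1 ≤ K := by omega
  have hsum : ∑' n, P (doubleOuterErasure X K n) ≠ ∞ := by
    refine ne_top_of_le_ne_top ?_ (ENNReal.tsum_le_tsum (hX.measure_doubleOuterErasure_le hK1))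
    rw [ENNReal.tsum_mul_left]
    exact ENNReal.mul_ne_top (by finiteness) tsum_inv_add_three_sq_ne_top
  have hae : ∀ᵐ ω ∂P, ∀ᶠ n in atTop, K - 2 ≤ gapL (X (n * (2 * K - 1)) ω) := by
    filter_upwards [hX.ae_admissible, ae_eventually_notMem hsum] with ω hω hgood
    exact tendsto_principal.1 ((tendsto_add_atTop_iff_nat 1).1 (tendsto_principal.2
      (hgood.mono fun n hn => le_gapL_of_notMem_doubleOuterErasure hK1 hω hn)))
  exact (measure_congr (ae_eq_univ.2 hae)).trans measure_univ
end

section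
/- In the annihilation–creation model with parameter K ≥ 2 started from A_0 = {0}, with probability 1 there are infinitely many n such that G²(A_n) ≥ 1, i.e., the set A_n has at least one gap of size at least 2. -/
open MeasureTheory Filter
open scoped ENNReal

/-- `G²(a)`: the number of gaps of `a` of size at least 2, counted via their left
endpoints: interior sites `x` with `x ∉ a`, `x+1 ∉ a` and `x-1 ∈ a`. -/
noncomputable def G2 (a : Finset ℤ) : ℕ :=
  ((Finset.Icc (a.min.untopD 0) (a.max.unbotD 0)).filter
    (fun x => x ∉ a ∧ x + 1 ∉ a ∧ x - 1 ∈ a)).card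

namespace ACproof

/-- convexity / no gap predicate -/
def NoGap (a : Finset ℤ) : Prop := ∀ x y z : ℤ, x ∈ a → z ∈ a → x ≤ y → y ≤ z → y ∈ a

lemma mem_bdry {y : ℤ} {a : Finset ℤ} : y ∈ bdryZ a ↔ ((y - 1 ∈ a ∨ y + 1 ∈ a) ∧ y ∉ a) := by
  unfold bdryZ
  simp only [Finset.mem_sdiff, Finset.mem_union, Finset.mem_image]
  constructor
  · rintro ⟨h, hy⟩
    refine ⟨?_, hy⟩
    rcases h with ⟨u, hu, rfl⟩ | ⟨u, hu, rfl⟩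
    · left; simpa using hu
    · right; simpa using hu
  · rintro ⟨h, hy⟩
    refine ⟨?_, hy⟩
    rcases h with h | h
    · exact Or.inl ⟨y - 1, h, by ring⟩
    · exact Or.inr ⟨y + 1, h, by ring⟩

lemma not_mem_of_mem_bdry {y : ℤ} {a : Finset ℤ} (h : y ∈ bdryZ a) : y ∉ a :=
  (mem_bdry.1 h).2

lemma max_succ_mem_bdry {a : Finset ℤ} (h : a.Nonempty) : a.max' h + 1 ∈ bdryZ a := by
  rw [mem_bdry]
  constructor
  · left; simpa using a.max'_mem h
  · intro hc
    have := a.le_max' _ hc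
    omega

lemma min_pred_mem_bdry {a : Finset ℤ} (h : a.Nonempty) : a.min' h - 1 ∈ bdryZ a := by
  rw [mem_bdry]
  constructor
  · right; simpa using a.min'_mem h
  · intro hc
    have := a.min'_le _ hc
    omega

lemma two_le_bdry_card {a : Finset ℤ} (h : a.Nonempty) : 2 ≤ (bdryZ a).card := by
  have h1 := max_succ_mem_bdry h
  have h2 := min_pred_mem_bdry h
  have hne : a.min' h - 1 ≠ a.max' h + 1 := by
    have := a.min'_le _ (a.max'_mem h)
    omega
  calc 2 = ({a.min' h - 1, a.max' h + 1} : Finset ℤ).card := by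
        rw [Finset.card_insert_of_notMem (by simpa using hne), Finset.card_singleton]
    _ ≤ (bdryZ a).card := Finset.card_le_card (by
        intro z hz
        simp only [Finset.mem_insert, Finset.mem_singleton] at hz
        rcases hz with rfl | rfl <;> assumption)

lemma insert_inj {a : Finset ℤ} {y z : ℤ} (hy : y ∉ a) (hz : z ∉ a)
    (h : insert y a = insert z a) : y = z := by
  have : y ∈ insert z a := h ▸ Finset.mem_insert_self y a
  rcases Finset.mem_insert.1 this with h' | h'
  · exact h'
  · exact absurd h' hy

lemma erase_inj {a : Finset ℤ} {y z : ℤ} (hy : y ∈ a) (hz : z ∈ a)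
    (h : a.erase y = a.erase z) : y = z := by
  by_contra hne
  have : y ∈ a.erase z := Finset.mem_erase.2 ⟨hne, hy⟩
  rw [← h] at this
  exact (Finset.mem_erase.1 this).1 rfl

/-- if the filter-left-endpoint pattern occurs and there is an element above, G2 ≥ 1 -/
lemma G2_pos {a : Finset ℤ} {x : ℤ} (hx : x ∉ a) (hx1 : x + 1 ∉ a) (hx2 : x - 1 ∈ a)
    (hv : ∃ v ∈ a, x < v) : 1 ≤ G2 a := by
  have hne : a.Nonempty := ⟨x - 1, hx2⟩
  obtain ⟨v, hv, hxv⟩ := hv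
  have hmin : a.min.untopD 0 = a.min' hne := by
    rw [← Finset.coe_min' hne]; rfl
  have hmax : a.max.unbotD 0 = a.max' hne := by
    rw [← Finset.coe_max' hne]; rfl
  have hxmem : x ∈ (Finset.Icc (a.min.untopD 0) (a.max.unbotD 0)).filter
      (fun x => x ∉ a ∧ x + 1 ∉ a ∧ x - 1 ∈ a) := by
    rw [Finset.mem_filter, Finset.mem_Icc, hmin, hmax]
    refine ⟨⟨?_, ?_⟩, hx, hx1, hx2⟩
    · have := a.min'_le _ hx2; omega
    · have := a.le_max' _ hv; omega
  have : ({x} : Finset ℤ) ⊆ _ := Finset.singleton_subset_iff.2 hxmem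
  calc 1 = ({x} : Finset ℤ).card := rfl
  _ ≤ _ := Finset.card_le_card this


/-- from a non-convex set with G2 = 0, find a size-one gap -/
lemma exists_size1_gap {a : Finset ℤ} (hni : ¬ NoGap a) (hG2 : G2 a = 0) :
    ∃ x : ℤ, x ∉ a ∧ x - 1 ∈ a ∧ x + 1 ∈ a := by
  unfold NoGap at hni
  push_neg at hni
  obtain ⟨u, w, z, hu, hz, huw, hwz, hw⟩ := hni
  have hS : (a.filter (· < w)).Nonempty := ⟨u, Finset.mem_filter.2 ⟨hu, by
    rcases lt_or_eq_of_le huw with h | h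
    · exact h
    · exact absurd (h ▸ hu) hw⟩⟩
  set v := (a.filter (· < w)).max' hS with hv
  have hvmem : v ∈ a.filter (· < w) := (a.filter (· < w)).max'_mem hS
  have hva : v ∈ a := (Finset.mem_filter.1 hvmem).1
  have hvw : v < w := (Finset.mem_filter.1 hvmem).2
  refine ⟨v + 1, ?_, by simpa using hva, ?_⟩
  · intro hc
    rcases lt_or_eq_of_le (by omega : v + 1 ≤ w) with h | h
    · have : v + 1 ≤ v := (a.filter (· < w)).le_max' _ (Finset.mem_filter.2 ⟨hc, h⟩)
      omega
    · exact hw (h ▸ hc)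
  · by_contra hc
    have h1 : (1:ℕ) ≤ G2 a := by
      apply G2_pos (a := a) (x := v + 1)
      · intro hcc
        rcases lt_or_eq_of_le (by omega : v + 1 ≤ w) with h | h
        · have : v + 1 ≤ v := (a.filter (· < w)).le_max' _ (Finset.mem_filter.2 ⟨hcc, h⟩)
          omega
        · exact hw (h ▸ hcc)
      · simpa using hc
      · simpa using hva
      · refine ⟨z, hz, ?_⟩
        have hwz' : w ≤ z := hwz
        have hzw : w ≠ z := fun h => hw (h ▸ hz)
        omega
    omega

/-- a gap with margin j on both sides -/
def GapMargin (j : ℕ) (b : Finset ℤ) : Prop :=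
  ∃ x : ℤ, x ∉ b ∧ j ≤ (b.filter (· < x)).card ∧ j ≤ (b.filter (x < ·)).card

lemma gapMargin_erase {j : ℕ} {b : Finset ℤ} (h : GapMargin (j + 1) b) (y : ℤ) :
    GapMargin j (b.erase y) := by
  obtain ⟨x, hx, h1, h2⟩ := h
  refine ⟨x, fun hc => hx (Finset.mem_of_mem_erase hc), ?_, ?_⟩
  · have : (b.filter (· < x)).erase y ⊆ (b.erase y).filter (· < x) := by
      intro z hz
      rw [Finset.mem_erase] at hz
      rw [Finset.mem_filter] at hz ⊢
      exact ⟨Finset.mem_erase.2 ⟨hz.1, hz.2.1⟩, hz.2.2⟩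
    have hcard := Finset.card_le_card this
    have := Finset.pred_card_le_card_erase (s := b.filter (· < x)) (a := y)
    omega
  · have : (b.filter (x < ·)).erase y ⊆ (b.erase y).filter (x < ·) := by
      intro z hz
      rw [Finset.mem_erase] at hz
      rw [Finset.mem_filter] at hz ⊢
      exact ⟨Finset.mem_erase.2 ⟨hz.1, hz.2.1⟩, hz.2.2⟩
    have hcard := Finset.card_le_card this
    have := Finset.pred_card_le_card_erase (s := b.filter (x < ·)) (a := y)
    omega

lemma gapMargin_not_noGap {b : Finset ℤ} (h : GapMargin 1 b) : ¬ NoGap b := by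
  obtain ⟨x, hx, h1, h2⟩ := h
  obtain ⟨u, hu⟩ := Finset.card_pos.1 (by omega : 0 < (b.filter (· < x)).card)
  obtain ⟨v, hv⟩ := Finset.card_pos.1 (by omega : 0 < (b.filter (x < ·)).card)
  rw [Finset.mem_filter] at hu hv
  intro hng
  exact hx (hng u x v hu.1 hv.1 (le_of_lt hu.2) (le_of_lt hv.2))

/-- at most j elements have fewer than j elements strictly below them -/
lemma count_low (s : Finset ℤ) (j : ℕ) :
    (s.filter (fun y => (s.filter (· < y)).card < j)).card ≤ j := by
  classical
  set T := s.filter (fun y => (s.filter (· < y)).card < j) with hT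
  have hmap : ∀ y ∈ T, (s.filter (· < y)).card ∈ Finset.range j := by
    intro y hy
    rw [hT, Finset.mem_filter] at hy
    exact Finset.mem_range.2 hy.2
  have hinj : ∀ y ∈ T, ∀ z ∈ T, (s.filter (· < y)).card = (s.filter (· < z)).card → y = z := by
    intro y hy z hz he
    by_contra hne
    have hys : y ∈ s := (Finset.mem_filter.1 (hT ▸ hy)).1
    have hzs : z ∈ s := (Finset.mem_filter.1 (hT ▸ hz)).1
    rcases lt_or_gt_of_ne hne with h | h
    · have hsub : insert y (s.filter (· < y)) ⊆ s.filter (· < z) := by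
        intro u hu
        rcases Finset.mem_insert.1 hu with rfl | hu
        · exact Finset.mem_filter.2 ⟨hys, h⟩
        · rw [Finset.mem_filter] at hu ⊢
          exact ⟨hu.1, lt_trans hu.2 h⟩
      have := Finset.card_le_card hsub
      rw [Finset.card_insert_of_notMem (by simp)] at this
      omega
    · have hsub : insert z (s.filter (· < z)) ⊆ s.filter (· < y) := by
        intro u hu
        rcases Finset.mem_insert.1 hu with rfl | hu
        · exact Finset.mem_filter.2 ⟨hzs, h⟩
        · rw [Finset.mem_filter] at hu ⊢
          exact ⟨hu.1, lt_trans hu.2 h⟩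
      have := Finset.card_le_card hsub
      rw [Finset.card_insert_of_notMem (by simp)] at this
      omega
  calc T.card ≤ (Finset.range j).card := Finset.card_le_card_of_injOn _ hmap hinj
  _ = j := Finset.card_range j

lemma count_high (s : Finset ℤ) (j : ℕ) :
    (s.filter (fun y => (s.filter (y < ·)).card < j)).card ≤ j := by
  classical
  have key := count_low (s.image (fun z => -z)) j
  have himg : ∀ y, ((s.image (fun z => -z)).filter (· < -y)).card = (s.filter (y < ·)).card := by
    intro y
    rw [Finset.filter_image]
    rw [Finset.card_image_of_injOn (Function.Injective.injOn neg_injective)]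
    congr 1
    ext z
    simp only [Finset.mem_filter]
    constructor
    · rintro ⟨h1, h2⟩; exact ⟨h1, by omega⟩
    · rintro ⟨h1, h2⟩; exact ⟨h1, by omega⟩
  have : (s.filter (fun y => (s.filter (y < ·)).card < j)).card
      ≤ ((s.image (fun z => -z)).filter
          (fun y => ((s.image (fun z => -z)).filter (· < y)).card < j)).card := by
    apply Finset.card_le_card_of_injOn (fun y => -y)
    · intro y hy
      rw [Finset.mem_coe, Finset.mem_filter] at hy ⊢
      refine ⟨Finset.mem_image_of_mem _ hy.1, ?_⟩
      rw [himg]; exact hy.2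
    · intro y _ z _ h
      exact neg_injective h
  omega


/-- invariant for the gap plan -/
def Inv (x w : ℤ) (c : Finset ℤ) : Prop := x ∉ c ∧ x - 1 ∈ c ∧ x + 1 ∈ c ∧ w ∈ c

lemma exists_inv {a : Finset ℤ} (hni : ¬ NoGap a) (hG2 : G2 a = 0) (hcard : 3 ≤ a.card) :
    ∃ x w : ℤ, Inv x w a ∧ (w < x - 1 ∨ x + 1 < w) := by
  classical
  obtain ⟨x, hx, hx1, hx2⟩ := exists_size1_gap hni hG2
  have hsub : a ⊆ insert (x-1) (insert (x+1) (a \ {x-1, x+1})) := by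
    intro z hz
    simp only [Finset.mem_insert, Finset.mem_sdiff, Finset.mem_singleton]
    by_cases h1 : z = x - 1
    · exact Or.inl h1
    by_cases h2 : z = x + 1
    · exact Or.inr (Or.inl h2)
    · exact Or.inr (Or.inr ⟨hz, by simp [h1, h2]⟩)
  have hne : (a \ {x-1, x+1}).Nonempty := by
    rw [← Finset.card_pos]
    have h1 := Finset.card_le_card hsub
    have h2 := Finset.card_insert_le (x-1) (insert (x+1) (a \ {x-1, x+1}))
    have h3 := Finset.card_insert_le (x+1) (a \ {x-1, x+1})
    omega
  obtain ⟨w, hw⟩ := hne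
  rw [Finset.mem_sdiff] at hw
  have hwa : w ∈ a := hw.1
  have hwne : w ≠ x - 1 ∧ w ≠ x + 1 := by
    constructor <;> (intro h; apply hw.2; simp [h])
  have hwx : w ≠ x := fun h => hx (h ▸ hwa)
  exact ⟨x, w, ⟨hx, hx1, hx2, hwa⟩, by omega⟩

lemma G2_pos_erase_right {c : Finset ℤ} {x w : ℤ} (hInv : Inv x w c) (hw : x + 1 < w) :
    1 ≤ G2 (c.erase (x+1)) := by
  obtain ⟨h1, h2, h3, h4⟩ := hInv
  apply G2_pos (x := x)
  · exact fun h => h1 (Finset.mem_of_mem_erase h)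
  · exact Finset.notMem_erase _ _
  · exact Finset.mem_erase.2 ⟨by omega, h2⟩
  · exact ⟨w, Finset.mem_erase.2 ⟨by omega, h4⟩, by omega⟩

lemma G2_pos_erase_left {c : Finset ℤ} {x w : ℤ} (hInv : Inv x w c) (hw : w < x - 1) :
    1 ≤ G2 (c.erase (x-1)) := by
  classical
  obtain ⟨h1, h2, h3, h4⟩ := hInv
  set b := c.erase (x-1) with hb
  have hwb : w ∈ b.filter (· < x - 1) :=
    Finset.mem_filter.2 ⟨Finset.mem_erase.2 ⟨by omega, h4⟩, hw⟩
  have hS : (b.filter (· < x - 1)).Nonempty := ⟨w, hwb⟩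
  set v := (b.filter (· < x - 1)).max' hS with hv
  have hvmem := (b.filter (· < x - 1)).max'_mem hS
  rw [Finset.mem_filter] at hvmem
  apply G2_pos (x := v + 1)
  · intro hc
    rcases lt_or_eq_of_le (by omega : v + 1 ≤ x - 1) with h | h
    · have : v + 1 ≤ v := (b.filter (· < x-1)).le_max' _ (Finset.mem_filter.2 ⟨hc, h⟩)
      omega
    · rw [h] at hc
      exact (Finset.notMem_erase _ _) hc
  · intro hc
    rcases lt_or_eq_of_le (by omega : v + 1 + 1 ≤ x) with h | h
    · rcases lt_or_eq_of_le (by omega : v + 1 + 1 ≤ x - 1) with h' | h'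
      · have : v + 1 + 1 ≤ v := (b.filter (· < x-1)).le_max' _ (Finset.mem_filter.2 ⟨hc, h'⟩)
        omega
      · rw [h'] at hc
        exact (Finset.notMem_erase _ _) hc
    · rw [h] at hc
      exact h1 (Finset.mem_of_mem_erase hc)
  · simpa using hvmem.1
  · refine ⟨x + 1, Finset.mem_erase.2 ⟨by omega, h3⟩, by omega⟩

lemma inv_insert {x w : ℤ} {c : Finset ℤ} (h : Inv x w c) {y : ℤ} (hy : y ≠ x) :
    Inv x w (insert y c) := by
  obtain ⟨h1, h2, h3, h4⟩ := h
  exact ⟨by simp [hy, h1, Ne.symm hy], Finset.mem_insert_of_mem h2,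
    Finset.mem_insert_of_mem h3, Finset.mem_insert_of_mem h4⟩

lemma inv_erase {x w : ℤ} {c : Finset ℤ} (h : Inv x w c) {y : ℤ}
    (hy1 : y ≠ x - 1) (hy2 : y ≠ x + 1) (hy3 : y ≠ w) : Inv x w (c.erase y) := by
  obtain ⟨h1, h2, h3, h4⟩ := h
  exact ⟨fun hc => h1 (Finset.mem_of_mem_erase hc),
    Finset.mem_erase.2 ⟨(Ne.symm hy1), h2⟩,
    Finset.mem_erase.2 ⟨(Ne.symm hy2), h3⟩,
    Finset.mem_erase.2 ⟨(Ne.symm hy3), h4⟩⟩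

/-! ### The one-step operator and its iterates -/

noncomputable def Qop (K t : ℕ) (φ : Finset ℤ → ℝ≥0∞) (a : Finset ℤ) : ℝ≥0∞ :=
  ∑' b : Finset ℤ, stepProb K t a b * φ b

noncomputable def Per (K : ℕ) : ℕ → ℕ → (Finset ℤ → ℝ≥0∞) → Finset ℤ → ℝ≥0∞
  | _, 0, φ => φ
  | t, j+1, φ => Qop K t (Per K (t+1) j φ)

lemma Per_zero (K t : ℕ) (φ : Finset ℤ → ℝ≥0∞) : Per K t 0 φ = φ := rfl

lemma Per_succ (K t j : ℕ) (φ : Finset ℤ → ℝ≥0∞) :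
    Per K t (j+1) φ = Qop K t (Per K (t+1) j φ) := rfl

lemma qop_add_rep {K t : ℕ} (ht : t % (2*K-1) < K) (φ : Finset ℤ → ℝ≥0∞) (a : Finset ℤ) :
    Qop K t φ a = ((bdryZ a).card : ℝ≥0∞)⁻¹ * ∑ y ∈ bdryZ a, φ (insert y a) := by
  classical
  unfold Qop stepProb
  simp only [if_pos ht]
  rw [tsum_eq_sum (s := (bdryZ a).image (fun y => insert y a))
    (by
      intro b hb
      rw [if_neg, zero_mul]
      rintro ⟨y, hy, rfl⟩
      exact hb (Finset.mem_image_of_mem _ hy))]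
  rw [Finset.sum_image (by
    intro y hy z hz h
    exact insert_inj (not_mem_of_mem_bdry hy) (not_mem_of_mem_bdry hz) h)]
  rw [Finset.mul_sum]
  apply Finset.sum_congr rfl
  intro y hy
  rw [if_pos ⟨y, hy, rfl⟩]

lemma qop_del_rep {K t : ℕ} (ht : ¬ t % (2*K-1) < K) (φ : Finset ℤ → ℝ≥0∞) (a : Finset ℤ) :
    Qop K t φ a = ((a.card : ℝ≥0∞))⁻¹ * ∑ y ∈ a, φ (a.erase y) := by
  classical
  unfold Qop stepProb
  simp only [if_neg ht]
  rw [tsum_eq_sum (s := a.image (fun y => a.erase y))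
    (by
      intro b hb
      rw [if_neg, zero_mul]
      rintro ⟨y, hy, rfl⟩
      exact hb (Finset.mem_image_of_mem _ hy))]
  rw [Finset.sum_image (by
    intro y hy z hz h
    exact erase_inj hy hz h)]
  rw [Finset.mul_sum]
  apply Finset.sum_congr rfl
  intro y hy
  rw [if_pos ⟨y, hy, rfl⟩]

lemma inv_mul_nat_le_one (n : ℕ) : ((n : ℝ≥0∞))⁻¹ * n ≤ 1 := by
  rcases Nat.eq_zero_or_pos n with rfl | h
  · simp
  · rw [ENNReal.inv_mul_cancel (by exact_mod_cast h.ne') (by simp)]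

lemma qop_mono {K t : ℕ} {φ ψ : Finset ℤ → ℝ≥0∞} (h : ∀ b, φ b ≤ ψ b) (a : Finset ℤ) :
    Qop K t φ a ≤ Qop K t ψ a :=
  ENNReal.tsum_le_tsum (fun b => mul_le_mul_right (h b) _)

lemma qop_addf {K t : ℕ} (φ ψ : Finset ℤ → ℝ≥0∞) (a : Finset ℤ) :
    Qop K t (fun b => φ b + ψ b) a = Qop K t φ a + Qop K t ψ a := by
  unfold Qop
  rw [← ENNReal.tsum_add]
  congr 1
  ext b
  rw [mul_add]

lemma qop_smul {K t : ℕ} (c : ℝ≥0∞) (φ : Finset ℤ → ℝ≥0∞) (a : Finset ℤ) :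
    Qop K t (fun b => c * φ b) a = c * Qop K t φ a := by
  unfold Qop
  rw [← ENNReal.tsum_mul_left]
  congr 1
  ext b
  ring

lemma qop_le_one {K t : ℕ} {φ : Finset ℤ → ℝ≥0∞} (hφ : ∀ b, φ b ≤ 1) (a : Finset ℤ) :
    Qop K t φ a ≤ 1 := by
  by_cases ht : t % (2*K-1) < K
  · rw [qop_add_rep ht]
    calc ((bdryZ a).card : ℝ≥0∞)⁻¹ * ∑ y ∈ bdryZ a, φ (insert y a)
        ≤ ((bdryZ a).card : ℝ≥0∞)⁻¹ * ∑ _y ∈ bdryZ a, 1 :=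
          mul_le_mul_right (Finset.sum_le_sum (fun y _ => hφ _)) _
      _ = ((bdryZ a).card : ℝ≥0∞)⁻¹ * (bdryZ a).card := by simp
      _ ≤ 1 := inv_mul_nat_le_one _
  · rw [qop_del_rep ht]
    calc ((a.card : ℝ≥0∞))⁻¹ * ∑ y ∈ a, φ (a.erase y)
        ≤ ((a.card : ℝ≥0∞))⁻¹ * ∑ _y ∈ a, 1 :=
          mul_le_mul_right (Finset.sum_le_sum (fun y _ => hφ _)) _
      _ = ((a.card : ℝ≥0∞))⁻¹ * a.card := by simp
      _ ≤ 1 := inv_mul_nat_le_one _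

lemma per_mono {K : ℕ} : ∀ (j t : ℕ) {φ ψ : Finset ℤ → ℝ≥0∞}, (∀ b, φ b ≤ ψ b) →
    ∀ a, Per K t j φ a ≤ Per K t j ψ a := by
  intro j
  induction j with
  | zero => intro t φ ψ h a; exact h a
  | succ j ih =>
    intro t φ ψ h a
    rw [Per_succ, Per_succ]
    exact qop_mono (fun b => ih (t+1) h b) a

lemma per_addf {K : ℕ} : ∀ (j t : ℕ) (φ ψ : Finset ℤ → ℝ≥0∞) (a : Finset ℤ),
    Per K t j (fun b => φ b + ψ b) a = Per K t j φ a + Per K t j ψ a := by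
  intro j
  induction j with
  | zero => intro t φ ψ a; rfl
  | succ j ih =>
    intro t φ ψ a
    rw [Per_succ, Per_succ, Per_succ]
    have : Per K (t+1) j (fun b => φ b + ψ b) =
        fun b => Per K (t+1) j φ b + Per K (t+1) j ψ b := by
      ext b; exact ih (t+1) φ ψ b
    rw [this, qop_addf]

lemma per_smul {K : ℕ} : ∀ (j t : ℕ) (c : ℝ≥0∞) (φ : Finset ℤ → ℝ≥0∞) (a : Finset ℤ),
    Per K t j (fun b => c * φ b) a = c * Per K t j φ a := by
  intro j
  induction j with
  | zero => intro t c φ a; rfl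
  | succ j ih =>
    intro t c φ a
    rw [Per_succ, Per_succ]
    have : Per K (t+1) j (fun b => c * φ b) = fun b => c * Per K (t+1) j φ b := by
      ext b; exact ih (t+1) c φ b
    rw [this, qop_smul]

lemma per_le_one {K : ℕ} : ∀ (j t : ℕ) {φ : Finset ℤ → ℝ≥0∞}, (∀ b, φ b ≤ 1) →
    ∀ a, Per K t j φ a ≤ 1 := by
  intro j
  induction j with
  | zero => intro t φ h a; exact h a
  | succ j ih =>
    intro t φ h a
    rw [Per_succ]
    exact qop_le_one (fun b => ih (t+1) h b) a


/-! ### time arithmetic -/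

lemma mod_period {K n i : ℕ} (h : i < 2*K-1) : (n*(2*K-1)+i) % (2*K-1) = i := by
  rw [Nat.mul_comm, Nat.mul_add_mod]
  exact Nat.mod_eq_of_lt h

lemma isAdd {K n i : ℕ} (hK : 2 ≤ K) (h : i < K) : (n*(2*K-1)+i) % (2*K-1) < K := by
  rw [mod_period (by omega)]; exact h

lemma isDel {K n i : ℕ} (hK : 2 ≤ K) (h1 : K ≤ i) (h2 : i < 2*K-1) :
    ¬ (n*(2*K-1)+i) % (2*K-1) < K := by
  rw [mod_period h2]; omega

/-! ### mass one -/

lemma per_one_del {K : ℕ} : ∀ (j t : ℕ) (a : Finset ℤ),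
    (∀ i, i < j → ¬ (t+i) % (2*K-1) < K) → j ≤ a.card →
    Per K t j (fun _ => (1:ℝ≥0∞)) a = 1 := by
  intro j
  induction j with
  | zero => intro t a _ _; rfl
  | succ j ih =>
    intro t a ht hc
    rw [Per_succ, qop_del_rep (by simpa using ht 0 (by omega))]
    have heq : ∀ y ∈ a, Per K (t+1) j (fun _ => (1:ℝ≥0∞)) (a.erase y) = 1 := by
      intro y hy
      apply ih (t+1) (a.erase y)
      · intro i hi
        have := ht (i+1) (by omega)
        rwa [show t + (i+1) = t + 1 + i by omega] at this
      · rw [Finset.card_erase_of_mem hy]; omega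
    rw [Finset.sum_congr rfl heq, Finset.sum_const, nsmul_eq_mul, mul_one]
    exact ENNReal.inv_mul_cancel (by exact_mod_cast (by omega : a.card ≠ 0)) (by simp)

lemma per_one_period {K : ℕ} (hK : 2 ≤ K) (n : ℕ) : ∀ (jA : ℕ), jA ≤ K → ∀ (a : Finset ℤ),
    a.Nonempty → K ≤ a.card + jA + 1 →
    Per K (n*(2*K-1) + (K - jA)) (jA + (K-1)) (fun _ => (1:ℝ≥0∞)) a = 1 := by
  intro jA
  induction jA with
  | zero =>
    intro _ a hne hc
    apply per_one_del
    · intro i hi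
      rw [show n*(2*K-1) + (K - 0) + i = n*(2*K-1) + (K + i) by omega]
      exact isDel hK (by omega) (by omega)
    · omega
  | succ jA ih =>
    intro hj a hne hc
    rw [show jA + 1 + (K-1) = (jA + (K-1)) + 1 by omega, Per_succ,
      qop_add_rep (isAdd hK (by omega))]
    have heq : ∀ y ∈ bdryZ a, Per K (n*(2*K-1) + (K - (jA+1)) + 1) (jA + (K-1))
        (fun _ => (1:ℝ≥0∞)) (insert y a) = 1 := by
      intro y hy
      rw [show n*(2*K-1) + (K - (jA+1)) + 1 = n*(2*K-1) + (K - jA) by omega]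
      apply ih (by omega)
      · exact ⟨y, Finset.mem_insert_self y a⟩
      · rw [Finset.card_insert_of_notMem (not_mem_of_mem_bdry hy)]; omega
    rw [Finset.sum_congr rfl heq, Finset.sum_const, nsmul_eq_mul, mul_one]
    have hb : (bdryZ a).card ≠ 0 := by
      have := two_le_bdry_card hne; omega
    exact ENNReal.inv_mul_cancel (by exact_mod_cast hb) (by simp)

lemma per_one_full {K : ℕ} (hK : 2 ≤ K) (n : ℕ) (a : Finset ℤ) (hne : a.Nonempty) :
    Per K (n*(2*K-1)) (2*K-1) (fun _ => (1:ℝ≥0∞)) a = 1 := by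
  have := per_one_period hK n K le_rfl a hne (by omega)
  rwa [show K - K = 0 by omega, Nat.add_zero, show K + (K-1) = 2*K-1 by omega] at this

/-! ### ENNReal helpers -/

lemma inv_mul_le_half {m k : ℕ} (h : 2*k ≤ m) : ((m:ℝ≥0∞))⁻¹ * k ≤ 2⁻¹ := by
  rcases Nat.eq_zero_or_pos m with rfl | hm
  · have : k = 0 := by omega
    subst this; simp
  have hk : (k : ℝ≥0∞) ≤ (m : ℝ≥0∞) * 2⁻¹ := by
    have h2 : ((2*k : ℕ) : ℝ≥0∞) ≤ (m : ℝ≥0∞) := by exact_mod_cast h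
    push_cast at h2
    calc (k : ℝ≥0∞) = 2 * k * 2⁻¹ := by
          rw [mul_comm 2 (k:ℝ≥0∞), mul_assoc, ENNReal.mul_inv_cancel (by norm_num) (by norm_num),
            mul_one]
      _ ≤ (m : ℝ≥0∞) * 2⁻¹ := mul_le_mul_left h2 _
  calc ((m:ℝ≥0∞))⁻¹ * k ≤ ((m:ℝ≥0∞))⁻¹ * ((m:ℝ≥0∞) * 2⁻¹) := mul_le_mul_right hk _
    _ = (((m:ℝ≥0∞))⁻¹ * m) * 2⁻¹ := by ring
    _ ≤ 1 * 2⁻¹ := mul_le_mul_left (inv_mul_nat_le_one m) _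
    _ = 2⁻¹ := one_mul _

lemma half_le_inv_mul {m k : ℕ} (h : m ≤ 2*k) (hm : m ≠ 0) : 2⁻¹ ≤ ((m:ℝ≥0∞))⁻¹ * k := by
  have hmk : (m:ℝ≥0∞) * 2⁻¹ ≤ (k : ℝ≥0∞) := by
    have h2 : (m : ℝ≥0∞) ≤ ((2*k : ℕ) : ℝ≥0∞) := by exact_mod_cast h
    push_cast at h2
    calc (m:ℝ≥0∞) * 2⁻¹ ≤ 2 * k * 2⁻¹ := mul_le_mul_left h2 _
      _ = (k : ℝ≥0∞) := by
          rw [mul_comm 2 (k:ℝ≥0∞), mul_assoc, ENNReal.mul_inv_cancel (by norm_num) (by norm_num),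
            mul_one]
  calc (2:ℝ≥0∞)⁻¹ = (((m:ℝ≥0∞))⁻¹ * m) * 2⁻¹ := by
        rw [ENNReal.inv_mul_cancel (by exact_mod_cast hm) (by simp), one_mul]
    _ = ((m:ℝ≥0∞))⁻¹ * ((m:ℝ≥0∞) * 2⁻¹) := by ring
    _ ≤ ((m:ℝ≥0∞))⁻¹ * k := mul_le_mul_right hmk _


/-! ### the interval-start half bound -/

open Classical in
noncomputable def chiPrime (n : ℕ) (b : Finset ℤ) : ℝ≥0∞ :=
  if ¬ NoGap b ∧ b.card = n+2 then 1 else 0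

open Classical in
noncomputable def chiSec (n : ℕ) (b : Finset ℤ) : ℝ≥0∞ :=
  if ¬ NoGap b ∧ b.card = n+2 then 0 else 1

open Classical in
noncomputable def chiG2 (b : Finset ℤ) : ℝ≥0∞ := if 1 ≤ G2 b then 1 else 0

lemma chi_add (n : ℕ) (b : Finset ℤ) : chiPrime n b + chiSec n b = 1 := by
  unfold chiPrime chiSec
  by_cases h : ¬ NoGap b ∧ b.card = n+2 <;> simp [h]

lemma chiSec_le_one (n : ℕ) (b : Finset ℤ) : chiSec n b ≤ 1 := by
  unfold chiSec; split <;> simp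

lemma chiG2_le_one (b : Finset ℤ) : chiG2 b ≤ 1 := by
  unfold chiG2; split <;> simp

lemma del_chain {K n : ℕ} : ∀ (j t : ℕ) (c : Finset ℤ),
    (∀ i, i < j → ¬ (t+i) % (2*K-1) < K) → GapMargin (j+1) c → c.card = n+2+j →
    Per K t j (chiSec n) c = 0 := by
  intro j
  induction j with
  | zero =>
    intro t c _ hg hc
    show chiSec n c = 0
    unfold chiSec
    rw [if_pos ⟨gapMargin_not_noGap hg, hc⟩]
  | succ j ih =>
    intro t c ht hg hc
    rw [Per_succ, qop_del_rep (by simpa using ht 0 (by omega))]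
    have heq : ∀ y ∈ c, Per K (t+1) j (chiSec n) (c.erase y) = 0 := by
      intro y hy
      apply ih (t+1) (c.erase y)
      · intro i hi
        have := ht (i+1) (by omega)
        rwa [show t + (i+1) = t + 1 + i by omega] at this
      · exact gapMargin_erase hg y
      · rw [Finset.card_erase_of_mem hy]; omega
    rw [Finset.sum_congr rfl heq, Finset.sum_const]
    simp

lemma first_del {K n : ℕ} (hK : 2 ≤ K) (c : Finset ℤ) (hc : c.card = n+1+K) (hn : 4*K ≤ n) :
    Per K (n*(2*K-1) + K) (K-1) (chiSec n) c ≤ 2⁻¹ := by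
  classical
  rw [show K - 1 = (K-2)+1 by omega, Per_succ,
    qop_del_rep (by
      rw [show n*(2*K-1) + K = n*(2*K-1) + K by rfl]
      exact isDel hK le_rfl (by omega))]
  set g : ℤ → ℝ≥0∞ := fun y => Per K (n*(2*K-1) + K + 1) (K-2) (chiSec n) (c.erase y) with hgdef
  have hgood : ∀ y ∈ c, ¬((c.filter (· < y)).card < K-1 ∨ (c.filter (y < ·)).card < K-1) →
      g y = 0 := by
    intro y hy hnot
    push_neg at hnot
    apply del_chain (j := K-2) (t := n*(2*K-1) + K + 1)
    · intro i hi
      rw [show n*(2*K-1) + K + 1 + i = n*(2*K-1) + (K + 1 + i) by omega]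
      exact isDel hK (by omega) (by omega)
    · refine ⟨y, Finset.notMem_erase _ _, ?_, ?_⟩
      · calc K - 2 + 1 ≤ (c.filter (· < y)).card := by omega
        _ ≤ ((c.erase y).filter (· < y)).card := Finset.card_le_card (by
            intro z hz
            rw [Finset.mem_filter] at hz ⊢
            exact ⟨Finset.mem_erase.2 ⟨by intro h; rw [h] at hz; exact lt_irrefl y hz.2, hz.1⟩,
              hz.2⟩)
      · calc K - 2 + 1 ≤ (c.filter (y < ·)).card := by omega
        _ ≤ ((c.erase y).filter (y < ·)).card := Finset.card_le_card (by
            intro z hz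
            rw [Finset.mem_filter] at hz ⊢
            exact ⟨Finset.mem_erase.2 ⟨by intro h; rw [h] at hz; exact lt_irrefl y hz.2, hz.1⟩,
              hz.2⟩)
    · rw [Finset.card_erase_of_mem hy]; omega
  have hg1 : ∀ y, g y ≤ 1 := fun y => per_le_one _ _ (fun b => chiSec_le_one n b) _
  have hsplit : ∑ y ∈ c, g y ≤ (2*K-2 : ℕ) := by
    set p : ℤ → Prop := fun y => (c.filter (· < y)).card < K-1 ∨ (c.filter (y < ·)).card < K-1
      with hp
    have : ∑ y ∈ c, g y = ∑ y ∈ c.filter p, g y + ∑ y ∈ c.filter (fun y => ¬ p y), g y :=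
      (Finset.sum_filter_add_sum_filter_not c p g).symm
    rw [this]
    have h1 : ∑ y ∈ c.filter p, g y ≤ (c.filter p).card • (1:ℝ≥0∞) :=
      Finset.sum_le_card_nsmul _ _ _ (fun y _ => hg1 y)
    have h2 : ∑ y ∈ c.filter (fun y => ¬ p y), g y = 0 := by
      apply Finset.sum_eq_zero
      intro y hy
      rw [Finset.mem_filter] at hy
      exact hgood y hy.1 hy.2
    rw [h2, add_zero]
    have hcardp : (c.filter p).card ≤ 2*K-2 := by
      have hsub : c.filter p ⊆
          (c.filter (fun y => (c.filter (· < y)).card < K-1)) ∪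
          (c.filter (fun y => (c.filter (y < ·)).card < K-1)) := by
        intro y hy
        rw [Finset.mem_filter] at hy
        rcases hy.2 with h | h
        · exact Finset.mem_union_left _ (Finset.mem_filter.2 ⟨hy.1, h⟩)
        · exact Finset.mem_union_right _ (Finset.mem_filter.2 ⟨hy.1, h⟩)
      have := Finset.card_le_card hsub
      have hu := Finset.card_union_le
        (c.filter (fun y => (c.filter (· < y)).card < K-1))
        (c.filter (fun y => (c.filter (y < ·)).card < K-1))
      have hl := count_low c (K-1)
      have hh := count_high c (K-1)
      omega
    calc ∑ y ∈ c.filter p, g y ≤ (c.filter p).card • (1:ℝ≥0∞) := h1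
      _ = ((c.filter p).card : ℝ≥0∞) := by rw [nsmul_eq_mul, mul_one]
      _ ≤ ((2*K-2 : ℕ) : ℝ≥0∞) := by exact_mod_cast hcardp
  calc ((c.card : ℝ≥0∞))⁻¹ * ∑ y ∈ c, g y ≤ ((c.card : ℝ≥0∞))⁻¹ * ((2*K-2:ℕ):ℝ≥0∞) :=
        mul_le_mul_right hsplit _
    _ ≤ 2⁻¹ := inv_mul_le_half (by omega)

lemma add_phase_int {K n : ℕ} (hK : 2 ≤ K) (hn : 4*K ≤ n) : ∀ (jA : ℕ), jA ≤ K →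
    ∀ (c : Finset ℤ), c.card = n+1+(K-jA) →
    Per K (n*(2*K-1) + (K - jA)) (jA + (K-1)) (chiSec n) c ≤ 2⁻¹ := by
  intro jA
  induction jA with
  | zero =>
    intro _ c hc
    rw [show K - 0 = K by omega, show 0 + (K-1) = K-1 by omega]
    exact first_del hK c (by omega) hn
  | succ jA ih =>
    intro hj c hc
    rw [show jA + 1 + (K-1) = (jA + (K-1)) + 1 by omega, Per_succ,
      qop_add_rep (isAdd hK (by omega))]
    have hb : ∀ y ∈ bdryZ c, Per K (n*(2*K-1) + (K - (jA+1)) + 1) (jA + (K-1))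
        (chiSec n) (insert y c) ≤ 2⁻¹ := by
      intro y hy
      rw [show n*(2*K-1) + (K - (jA+1)) + 1 = n*(2*K-1) + (K - jA) by omega]
      apply ih (by omega)
      rw [Finset.card_insert_of_notMem (not_mem_of_mem_bdry hy)]
      omega
    calc ((bdryZ c).card : ℝ≥0∞)⁻¹ * ∑ y ∈ bdryZ c, Per K (n*(2*K-1) + (K - (jA+1)) + 1)
          (jA + (K-1)) (chiSec n) (insert y c)
        ≤ ((bdryZ c).card : ℝ≥0∞)⁻¹ * ∑ _y ∈ bdryZ c, 2⁻¹ :=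
          mul_le_mul_right (Finset.sum_le_sum hb) _
      _ = (((bdryZ c).card : ℝ≥0∞)⁻¹ * (bdryZ c).card) * 2⁻¹ := by
          rw [Finset.sum_const, nsmul_eq_mul]; ring
      _ ≤ 1 * 2⁻¹ := mul_le_mul_left (inv_mul_nat_le_one _) _
      _ = 2⁻¹ := one_mul _

lemma int_half {K n : ℕ} (hK : 2 ≤ K) (hn : 4*K ≤ n) (a : Finset ℤ) (hc : a.card = n+1) :
    Per K (n*(2*K-1)) (2*K-1) (chiSec n) a ≤ 2⁻¹ := by
  have := add_phase_int hK hn K le_rfl a (by omega)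
  rwa [show K - K = 0 by omega, Nat.add_zero, show K + (K-1) = 2*K-1 by omega] at this


/-! ### the gap-start success bound -/

lemma final_del {K n : ℕ} (hK : 2 ≤ K) {x w : ℤ} (hside : w < x - 1 ∨ x + 1 < w)
    (c : Finset ℤ) (hInv : Inv x w c) (hc : c.card = n+3) :
    (((n:ℝ≥0∞))+3)⁻¹ ≤ Per K (n*(2*K-1) + (2*K-2)) 1 chiG2 c := by
  rw [Per_succ, qop_del_rep (isDel hK (by omega) (by omega))]
  set y0 : ℤ := if x + 1 < w then x + 1 else x - 1 with hy0
  have hy0mem : y0 ∈ c := by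
    rw [hy0]; split
    · exact hInv.2.2.1
    · exact hInv.2.1
  have hval : chiG2 (c.erase y0) = 1 := by
    unfold chiG2
    rw [if_pos]
    rw [hy0]
    split
    · exact G2_pos_erase_right hInv (by assumption)
    · rcases hside with h | h
      · exact G2_pos_erase_left hInv h
      · omega
  have hsum : chiG2 (c.erase y0) ≤ ∑ y ∈ c, chiG2 (c.erase y) :=
    Finset.single_le_sum (f := fun y => chiG2 (c.erase y)) (fun y _ => zero_le) hy0mem
  calc (((n:ℝ≥0∞))+3)⁻¹ = ((c.card : ℝ≥0∞))⁻¹ * 1 := by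
        rw [mul_one, hc]; norm_cast
    _ ≤ ((c.card : ℝ≥0∞))⁻¹ * ∑ y ∈ c, chiG2 (c.erase y) := by
        rw [← hval] at *
        exact mul_le_mul_right hsum _

lemma mid_del {K n : ℕ} (hK : 2 ≤ K) (hn : 6 ≤ n) {x w : ℤ}
    (hside : w < x - 1 ∨ x + 1 < w) : ∀ (j : ℕ), j ≤ K - 2 →
    ∀ (c : Finset ℤ), Inv x w c → c.card = n+3+j →
    (2⁻¹:ℝ≥0∞)^j * (((n:ℝ≥0∞))+3)⁻¹ ≤ Per K (n*(2*K-1) + (2*K-2-j)) (j+1) chiG2 c := by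
  intro j
  induction j with
  | zero =>
    intro _ c hInv hc
    rw [pow_zero, one_mul, show 2*K-2-0 = 2*K-2 by omega]
    exact final_del hK hside c hInv (by omega)
  | succ j ih =>
    intro hj c hInv hc
    rw [show (j+1)+1 = (j+1)+1 by rfl, Per_succ,
      qop_del_rep (isDel hK (by omega) (by omega))]
    set S : Finset ℤ := ((c.erase (x-1)).erase (x+1)).erase w with hS
    have hSsub : S ⊆ c := by
      intro z hz
      exact Finset.mem_of_mem_erase (Finset.mem_of_mem_erase (Finset.mem_of_mem_erase hz))
    have hScard : c.card ≤ S.card + 3 := by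
      rw [hS]
      have h1 := Finset.pred_card_le_card_erase (s := c) (a := x-1)
      have h2 := Finset.pred_card_le_card_erase (s := c.erase (x-1)) (a := x+1)
      have h3 := Finset.pred_card_le_card_erase (s := (c.erase (x-1)).erase (x+1)) (a := w)
      have hc1 := Finset.card_erase_le (s := c) (a := x-1)
      have hc2 := Finset.card_erase_le (s := c.erase (x-1)) (a := x+1)
      omega
    have hterm : ∀ y ∈ S, (2⁻¹:ℝ≥0∞)^j * (((n:ℝ≥0∞))+3)⁻¹ ≤
        Per K (n*(2*K-1) + (2*K-2-(j+1)) + 1) (j+1) chiG2 (c.erase y) := by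
      intro y hy
      rw [show n*(2*K-1) + (2*K-2-(j+1)) + 1 = n*(2*K-1) + (2*K-2-j) by omega]
      have hyne : y ≠ x - 1 ∧ y ≠ x + 1 ∧ y ≠ w := by
        rw [hS] at hy
        have h3 := Finset.ne_of_mem_erase hy
        have hy2 := Finset.mem_of_mem_erase hy
        have h2 := Finset.ne_of_mem_erase hy2
        have hy1 := Finset.mem_of_mem_erase hy2
        have h1 := Finset.ne_of_mem_erase hy1
        exact ⟨h1, h2, h3⟩
      apply ih (by omega) _ (inv_erase hInv hyne.1 hyne.2.1 hyne.2.2)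
      rw [Finset.card_erase_of_mem (hSsub hy)]
      omega
    calc (2⁻¹:ℝ≥0∞)^(j+1) * (((n:ℝ≥0∞))+3)⁻¹
        = 2⁻¹ * ((2⁻¹:ℝ≥0∞)^j * (((n:ℝ≥0∞))+3)⁻¹) := by rw [pow_succ]; ring
      _ ≤ (((c.card:ℝ≥0∞))⁻¹ * S.card) * ((2⁻¹:ℝ≥0∞)^j * (((n:ℝ≥0∞))+3)⁻¹) := by
          apply mul_le_mul_left
          exact half_le_inv_mul (by omega) (by omega)
      _ = ((c.card:ℝ≥0∞))⁻¹ * (S.card * ((2⁻¹:ℝ≥0∞)^j * (((n:ℝ≥0∞))+3)⁻¹)) := by ring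
      _ = ((c.card:ℝ≥0∞))⁻¹ * ∑ _y ∈ S, (2⁻¹:ℝ≥0∞)^j * (((n:ℝ≥0∞))+3)⁻¹ := by
          rw [Finset.sum_const, nsmul_eq_mul]
      _ ≤ ((c.card:ℝ≥0∞))⁻¹ * ∑ y ∈ S, Per K (n*(2*K-1) + (2*K-2-(j+1)) + 1) (j+1) chiG2
            (c.erase y) := mul_le_mul_right (Finset.sum_le_sum hterm) _
      _ ≤ ((c.card:ℝ≥0∞))⁻¹ * ∑ y ∈ c, Per K (n*(2*K-1) + (2*K-2-(j+1)) + 1) (j+1) chiG2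
            (c.erase y) :=
          mul_le_mul_right (Finset.sum_le_sum_of_subset_of_nonneg hSsub
            (fun _ _ _ => zero_le)) _

lemma add_phase_gap {K n : ℕ} (hK : 2 ≤ K) (hn : 6 ≤ n) {x w : ℤ}
    (hside : w < x - 1 ∨ x + 1 < w) : ∀ (jA : ℕ), jA ≤ K →
    ∀ (c : Finset ℤ), Inv x w c → c.card = n+1+(K-jA) →
    (2⁻¹:ℝ≥0∞)^jA * ((2⁻¹:ℝ≥0∞)^(K-2) * (((n:ℝ≥0∞))+3)⁻¹) ≤
      Per K (n*(2*K-1) + (K - jA)) (jA + (K-1)) chiG2 c := by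
  intro jA
  induction jA with
  | zero =>
    intro _ c hInv hc
    rw [pow_zero, one_mul, show K - 0 = K by omega, show 0 + (K-1) = (K-2)+1 by omega,
      show n*(2*K-1) + K = n*(2*K-1) + (2*K-2-(K-2)) by omega]
    exact mid_del hK hn hside (K-2) le_rfl c hInv (by omega)
  | succ jA ih =>
    intro hj c hInv hc
    rw [show jA + 1 + (K-1) = (jA + (K-1)) + 1 by omega, Per_succ,
      qop_add_rep (isAdd hK (by omega))]
    have hcne : c.Nonempty := ⟨x-1, hInv.2.1⟩
    have hbdry := two_le_bdry_card hcne
    have hterm : ∀ y ∈ (bdryZ c).erase x,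
        (2⁻¹:ℝ≥0∞)^jA * ((2⁻¹:ℝ≥0∞)^(K-2) * (((n:ℝ≥0∞))+3)⁻¹) ≤
        Per K (n*(2*K-1) + (K - (jA+1)) + 1) (jA + (K-1)) chiG2 (insert y c) := by
      intro y hy
      rw [show n*(2*K-1) + (K - (jA+1)) + 1 = n*(2*K-1) + (K - jA) by omega]
      have hyb : y ∈ bdryZ c := Finset.mem_of_mem_erase hy
      apply ih (by omega) _ (inv_insert hInv (Finset.ne_of_mem_erase hy))
      rw [Finset.card_insert_of_notMem (not_mem_of_mem_bdry hyb)]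
      omega
    have hec : (bdryZ c).card ≤ 2 * ((bdryZ c).erase x).card := by
      have := Finset.pred_card_le_card_erase (s := bdryZ c) (a := x)
      omega
    calc (2⁻¹:ℝ≥0∞)^(jA+1) * ((2⁻¹:ℝ≥0∞)^(K-2) * (((n:ℝ≥0∞))+3)⁻¹)
        = 2⁻¹ * ((2⁻¹:ℝ≥0∞)^jA * ((2⁻¹:ℝ≥0∞)^(K-2) * (((n:ℝ≥0∞))+3)⁻¹)) := by
          rw [pow_succ]; ring
      _ ≤ ((((bdryZ c).card:ℝ≥0∞))⁻¹ * ((bdryZ c).erase x).card) *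
            ((2⁻¹:ℝ≥0∞)^jA * ((2⁻¹:ℝ≥0∞)^(K-2) * (((n:ℝ≥0∞))+3)⁻¹)) :=
          mul_le_mul_left (half_le_inv_mul hec (by omega)) _
      _ = (((bdryZ c).card:ℝ≥0∞))⁻¹ * ∑ _y ∈ (bdryZ c).erase x,
            (2⁻¹:ℝ≥0∞)^jA * ((2⁻¹:ℝ≥0∞)^(K-2) * (((n:ℝ≥0∞))+3)⁻¹) := by
          rw [Finset.sum_const, nsmul_eq_mul]; ring
      _ ≤ (((bdryZ c).card:ℝ≥0∞))⁻¹ * ∑ y ∈ (bdryZ c).erase x,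
            Per K (n*(2*K-1) + (K - (jA+1)) + 1) (jA + (K-1)) chiG2 (insert y c) :=
          mul_le_mul_right (Finset.sum_le_sum hterm) _
      _ ≤ (((bdryZ c).card:ℝ≥0∞))⁻¹ * ∑ y ∈ bdryZ c,
            Per K (n*(2*K-1) + (K - (jA+1)) + 1) (jA + (K-1)) chiG2 (insert y c) :=
          mul_le_mul_right (Finset.sum_le_sum_of_subset_of_nonneg (Finset.erase_subset _ _)
            (fun _ _ _ => zero_le)) _

/-- the per-period success probability lower bound -/
noncomputable def epsP (K n : ℕ) : ℝ≥0∞ := (2⁻¹:ℝ≥0∞)^(2*K) * (((n + 2*K + 2 : ℕ)):ℝ≥0∞)⁻¹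

lemma epsP_le_one {K n : ℕ} : epsP K n ≤ 1 := by
  unfold epsP
  calc (2⁻¹:ℝ≥0∞)^(2*K) * (((n + 2*K + 2 : ℕ)):ℝ≥0∞)⁻¹ ≤ 1 * 1 := by
        apply mul_le_mul'
        · exact pow_le_one' (by
            rw [ENNReal.inv_le_one]
            exact one_le_two) _
        · rw [ENNReal.inv_le_one]
          exact_mod_cast Nat.one_le_iff_ne_zero.2 (by omega)
    _ = 1 := one_mul _

lemma epsP_antitone {K n : ℕ} : epsP K (n+1) ≤ epsP K n := by
  unfold epsP
  apply mul_le_mul_right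
  rw [ENNReal.inv_le_inv]
  exact_mod_cast (by omega : n + 2*K + 2 ≤ n+1 + 2*K + 2)

lemma gap_lower {K n : ℕ} (hK : 2 ≤ K) (hn : 6 ≤ n) {x w : ℤ} (a : Finset ℤ)
    (hInv : Inv x w a) (hside : w < x - 1 ∨ x + 1 < w) (hc : a.card = n+1) :
    epsP K n ≤ Per K (n*(2*K-1)) (2*K-1) chiG2 a := by
  have h := add_phase_gap hK hn hside K le_rfl a hInv (by omega)
  rw [show K - K = 0 by omega, Nat.add_zero, show K + (K-1) = 2*K-1 by omega] at h
  refine le_trans ?_ h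
  unfold epsP
  rw [← mul_assoc, ← pow_add]
  apply mul_le_mul'
  · exact pow_le_pow_of_le_one (zero_le)
      (by rw [ENNReal.inv_le_one]; exact one_le_two) (by omega)
  · rw [show ((n:ℝ≥0∞)) + 3 = (((n+3:ℕ)):ℝ≥0∞) by push_cast; ring]
    rw [ENNReal.inv_le_inv]
    exact_mod_cast (by omega : n+3 ≤ n+2*K+2)

/-- Lemma B : one period from a gap configuration -/
lemma gap_period {K n : ℕ} (hK : 2 ≤ K) (hn : 6 ≤ n) {x w : ℤ} (a : Finset ℤ)
    (hInv : Inv x w a) (hside : w < x - 1 ∨ x + 1 < w) (hc : a.card = n+1)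
    (φ : Finset ℤ → ℝ≥0∞) (hφ1 : ∀ b, φ b ≤ 1) (hφ0 : ∀ b, 1 ≤ G2 b → φ b = 0) :
    Per K (n*(2*K-1)) (2*K-1) φ a + epsP K n ≤ 1 := by
  have hpoint : ∀ b, φ b + chiG2 b ≤ 1 := by
    intro b
    unfold chiG2
    by_cases h : 1 ≤ G2 b
    · rw [if_pos h, hφ0 b h, zero_add]
    · rw [if_neg h, add_zero]; exact hφ1 b
  calc Per K (n*(2*K-1)) (2*K-1) φ a + epsP K n
      ≤ Per K (n*(2*K-1)) (2*K-1) φ a + Per K (n*(2*K-1)) (2*K-1) chiG2 a :=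
        add_le_add_right (gap_lower hK hn a hInv hside hc) _
    _ = Per K (n*(2*K-1)) (2*K-1) (fun b => φ b + chiG2 b) a := (per_addf _ _ _ _ _).symm
    _ ≤ 1 := per_le_one _ _ hpoint _

/-- Lemma A : one period from an arbitrary (e.g. interval) configuration -/
lemma int_period {K n : ℕ} (hK : 2 ≤ K) (hn : 4*K ≤ n) (a : Finset ℤ) (hc : a.card = n+1)
    (ε : ℝ≥0∞) (hε : ε ≤ 1) (φ : Finset ℤ → ℝ≥0∞) (hφ1 : ∀ b, φ b ≤ 1)
    (hφ2 : ∀ b, ¬ NoGap b → b.card = n+2 → φ b + ε ≤ 1) :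
    Per K (n*(2*K-1)) (2*K-1) φ a + ε * 2⁻¹ ≤ 1 := by
  classical
  have hane : a.Nonempty := Finset.card_pos.1 (by omega)
  have hpoint : ∀ b, φ b + ε * chiPrime n b ≤ 1 := by
    intro b
    unfold chiPrime
    by_cases h : ¬ NoGap b ∧ b.card = n+2
    · rw [if_pos h, mul_one]; exact hφ2 b h.1 h.2
    · rw [if_neg h, mul_zero, add_zero]; exact hφ1 b
  have hone : Per K (n*(2*K-1)) (2*K-1) (fun b => φ b + ε * chiPrime n b) a ≤ 1 :=
    per_le_one _ _ hpoint _
  have hsplit : Per K (n*(2*K-1)) (2*K-1) φ a +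
      ε * Per K (n*(2*K-1)) (2*K-1) (chiPrime n) a ≤ 1 := by
    rw [← per_smul]
    rw [← per_addf]
    exact hone
  have hPsum : Per K (n*(2*K-1)) (2*K-1) (chiPrime n) a +
      Per K (n*(2*K-1)) (2*K-1) (chiSec n) a = 1 := by
    rw [← per_addf]
    have : (fun b => chiPrime n b + chiSec n b) = (fun _ : Finset ℤ => (1:ℝ≥0∞)) := by
      ext b; exact chi_add n b
    rw [this]
    exact per_one_full hK n a hane
  have hSec := int_half hK hn a hc
  have hPrime : 2⁻¹ ≤ Per K (n*(2*K-1)) (2*K-1) (chiPrime n) a := by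
    have heq : Per K (n*(2*K-1)) (2*K-1) (chiPrime n) a =
        1 - Per K (n*(2*K-1)) (2*K-1) (chiSec n) a :=
      ENNReal.eq_sub_of_add_eq (by
        exact ne_top_of_le_ne_top ENNReal.one_ne_top
          (le_trans hSec (by norm_num))) hPsum
    rw [heq]
    calc (2⁻¹:ℝ≥0∞) = 1 - 2⁻¹ :=
          ENNReal.eq_sub_of_add_eq (by norm_num) ENNReal.inv_two_add_inv_two
      _ ≤ 1 - Per K (n*(2*K-1)) (2*K-1) (chiSec n) a := tsub_le_tsub_left hSec 1
  calc Per K (n*(2*K-1)) (2*K-1) φ a + ε * 2⁻¹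
      ≤ Per K (n*(2*K-1)) (2*K-1) φ a + ε * Per K (n*(2*K-1)) (2*K-1) (chiPrime n) a :=
        add_le_add_right (mul_le_mul_right hPrime ε) _
    _ ≤ 1 := hsplit


noncomputable def PsiF : Finset ℤ → ℝ≥0∞ := fun c => if G2 c = 0 then 1 else 0

noncomputable def PhiF (K n : ℕ) : Finset ℤ → ℝ≥0∞ := fun b =>
  (if G2 b = 0 then (1:ℝ≥0∞) else 0) * Per K ((n+1)*(2*K-1)) (2*K-1) PsiF b

lemma PsiF_le_one (c : Finset ℤ) : PsiF c ≤ 1 := by unfold PsiF; split <;> simp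

lemma PsiF_zero {c : Finset ℤ} (h : 1 ≤ G2 c) : PsiF c = 0 := by
  unfold PsiF; rw [if_neg (by omega)]

lemma PhiF_le_one (K n : ℕ) (b : Finset ℤ) : PhiF K n b ≤ 1 := by
  unfold PhiF
  exact mul_le_one' (by split <;> simp) (per_le_one _ _ PsiF_le_one _)

lemma PhiF_zero (K n : ℕ) {b : Finset ℤ} (h : 1 ≤ G2 b) : PhiF K n b = 0 := by
  unfold PhiF; rw [if_neg (by omega), zero_mul]

/-- the two-period contraction -/
lemma two_period {K n : ℕ} (hK : 2 ≤ K) (hn : 5*K + 7 ≤ n) (a : Finset ℤ)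
    (hc : a.card = n+1) (hG2 : G2 a = 0) :
    Per K (n*(2*K-1)) (2*K-1) (PhiF K n) a + 2⁻¹ * epsP K (n+1) ≤ 1 := by
  by_cases hng : NoGap a
  · rw [mul_comm (2⁻¹ : ℝ≥0∞) (epsP K (n+1))]
    apply int_period hK (by omega) a hc (epsP K (n+1)) epsP_le_one _ (PhiF_le_one K n)
    intro b hni hbc
    by_cases hg : G2 b = 0
    · obtain ⟨x, w, hInv, hside⟩ := exists_inv hni hg (by omega)
      have hB := gap_period hK (by omega : 6 ≤ n+1) b hInv hside (by omega) PsiF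
        PsiF_le_one (fun c hc' => PsiF_zero hc')
      unfold PhiF
      rw [if_pos hg, one_mul]
      exact hB
    · unfold PhiF
      rw [if_neg hg, zero_mul, zero_add]
      exact epsP_le_one
  · obtain ⟨x, w, hInv, hside⟩ := exists_inv hng hG2 (by omega)
    have hB := gap_period hK (by omega : 6 ≤ n) a hInv hside hc (PhiF K n)
      (PhiF_le_one K n) (fun b hb => PhiF_zero K n hb)
    calc Per K (n*(2*K-1)) (2*K-1) (PhiF K n) a + 2⁻¹ * epsP K (n+1)
        ≤ Per K (n*(2*K-1)) (2*K-1) (PhiF K n) a + 1 * epsP K n :=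
          add_le_add_right (mul_le_mul' (by rw [ENNReal.inv_le_one]; exact one_le_two)
            epsP_antitone) _
      _ = Per K (n*(2*K-1)) (2*K-1) (PhiF K n) a + epsP K n := by rw [one_mul]
      _ ≤ 1 := hB


/-! ### the filtered evolution -/

def chkProp (K N t : ℕ) (b : Finset ℤ) : Prop :=
  t % (2*K-1) = 0 → N ≤ t / (2*K-1) → G2 b = 0

open Classical in
noncomputable def cind (K N s : ℕ) (b : Finset ℤ) : ℝ≥0∞ := if chkProp K N s b then 1 else 0

open Classical in
noncomputable def nu (K N : ℕ) : ℕ → Finset ℤ → ℝ≥0∞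
  | 0 => fun b => if b = ({0} : Finset ℤ) then 1 else 0
  | (t+1) => fun b => cind K N (t+1) b * ∑' a : Finset ℤ, nu K N t a * stepProb K t a b

lemma nu_succ (K N t : ℕ) (b : Finset ℤ) :
    nu K N (t+1) b = cind K N (t+1) b * ∑' a : Finset ℤ, nu K N t a * stepProb K t a b := rfl

def cardAt (K : ℕ) : ℕ → ℕ
  | 0 => 1
  | (t+1) => if t % (2*K-1) < K then cardAt K t + 1 else cardAt K t - 1

lemma cardAt_within {K : ℕ} (hK : 2 ≤ K) (n : ℕ) (hbase : cardAt K (n*(2*K-1)) = n+1) :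
    ∀ i, i ≤ 2*K-1 → cardAt K (n*(2*K-1)+i) = if i ≤ K then n+1+i else n+1+(2*K-i) := by
  intro i
  induction i with
  | zero => intro _; simpa using hbase
  | succ i ih =>
    intro hi
    have hstep : cardAt K (n*(2*K-1)+i+1) =
        if (n*(2*K-1)+i) % (2*K-1) < K then cardAt K (n*(2*K-1)+i) + 1
        else cardAt K (n*(2*K-1)+i) - 1 := rfl
    rw [show n*(2*K-1)+(i+1) = n*(2*K-1)+i+1 by omega, hstep, mod_period (by omega),
      ih (by omega)]
    by_cases h : i < K
    · rw [if_pos h, if_pos (by omega), if_pos (by omega)]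
      omega
    · rw [if_neg h]
      by_cases h2 : i ≤ K
      · rw [if_pos h2, if_neg (by omega)]
        omega
      · rw [if_neg h2, if_neg (by omega)]
        omega

lemma cardAt_period {K : ℕ} (hK : 2 ≤ K) : ∀ n, cardAt K (n*(2*K-1)) = n+1 := by
  intro n
  induction n with
  | zero => rw [Nat.zero_mul]; rfl
  | succ n ih =>
    have := cardAt_within hK n ih (2*K-1) le_rfl
    rw [if_neg (by omega)] at this
    rw [show (n+1)*(2*K-1) = n*(2*K-1)+(2*K-1) by ring]
    rw [this]
    omega

lemma stepProb_ne_zero {K t : ℕ} {a b : Finset ℤ} (h : stepProb K t a b ≠ 0) :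
    (t % (2*K-1) < K ∧ ∃ y ∈ bdryZ a, b = insert y a) ∨
    (¬ t % (2*K-1) < K ∧ ∃ y ∈ a, b = a.erase y) := by
  unfold stepProb at h
  by_cases ht : t % (2*K-1) < K
  · rw [if_pos ht] at h
    left
    refine ⟨ht, ?_⟩
    by_contra hc
    rw [if_neg hc] at h
    exact h rfl
  · rw [if_neg ht] at h
    right
    refine ⟨ht, ?_⟩
    by_contra hc
    rw [if_neg hc] at h
    exact h rfl

lemma nu_card {K N : ℕ} : ∀ (t : ℕ) (b : Finset ℤ), nu K N t b ≠ 0 → b.card = cardAt K t := by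
  intro t
  induction t with
  | zero =>
    intro b h
    have : b = ({0} : Finset ℤ) := by
      by_contra hc
      exact h (if_neg hc)
    rw [this]; rfl
  | succ t ih =>
    intro b h
    rw [nu_succ] at h
    have hsum : (∑' a : Finset ℤ, nu K N t a * stepProb K t a b) ≠ 0 := by
      intro hc; rw [hc, mul_zero] at h; exact h rfl
    have : ∃ a : Finset ℤ, nu K N t a * stepProb K t a b ≠ 0 := by
      by_contra hc
      push_neg at hc
      exact hsum (by
        apply ENNReal.tsum_eq_zero.2
        intro a; exact hc a)
    obtain ⟨a, ha⟩ := this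
    have h1 : nu K N t a ≠ 0 := fun hc => ha (by rw [hc, zero_mul])
    have h2 : stepProb K t a b ≠ 0 := fun hc => ha (by rw [hc, mul_zero])
    have hca := ih a h1
    have hstep : cardAt K (t+1) =
        if t % (2*K-1) < K then cardAt K t + 1 else cardAt K t - 1 := rfl
    rcases stepProb_ne_zero h2 with ⟨ht, y, hy, rfl⟩ | ⟨ht, y, hy, rfl⟩
    · rw [Finset.card_insert_of_notMem (not_mem_of_mem_bdry hy), hstep, if_pos ht, hca]
    · rw [Finset.card_erase_of_mem hy, hstep, if_neg ht, hca]

lemma nu_G2 {K N n : ℕ} (hK : 2 ≤ K) (hn : 1 ≤ n) (hNn : N ≤ n) {b : Finset ℤ}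
    (h : nu K N (n*(2*K-1)) b ≠ 0) : G2 b = 0 := by
  have hpos : 1 ≤ n*(2*K-1) := by
    have : 1*1 ≤ n*(2*K-1) := Nat.mul_le_mul hn (by omega)
    omega
  obtain ⟨t, ht⟩ : ∃ t, n*(2*K-1) = t+1 := ⟨n*(2*K-1)-1, by omega⟩
  rw [ht, nu_succ] at h
  have hchk : chkProp K N (t+1) b := by
    by_contra hc
    unfold cind at h
    rw [if_neg hc, zero_mul] at h
    exact h rfl
  apply hchk <;> rw [← ht]
  · exact Nat.mul_mod_left n (2*K-1)
  · rw [Nat.mul_div_cancel n (by omega : 0 < 2*K-1)]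
    exact hNn

noncomputable def FPer (K N : ℕ) : ℕ → ℕ → (Finset ℤ → ℝ≥0∞) → Finset ℤ → ℝ≥0∞
  | _, 0, ψ => ψ
  | t, j+1, ψ => Qop K t (fun b => cind K N (t+1) b * FPer K N (t+1) j ψ b)

lemma FPer_succ (K N t j : ℕ) (ψ : Finset ℤ → ℝ≥0∞) :
    FPer K N t (j+1) ψ = Qop K t (fun b => cind K N (t+1) b * FPer K N (t+1) j ψ b) := rfl

lemma nu_unroll {K N : ℕ} : ∀ (j t : ℕ) (ψ : Finset ℤ → ℝ≥0∞),
    ∑' b : Finset ℤ, nu K N (t+j) b * ψ b =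
    ∑' a : Finset ℤ, nu K N t a * FPer K N t j ψ a := by
  intro j
  induction j with
  | zero => intro t ψ; rfl
  | succ j ih =>
    intro t ψ
    rw [show t + (j+1) = (t+1) + j by omega, ih (t+1) ψ]
    rw [FPer_succ]
    calc ∑' a : Finset ℤ, nu K N (t+1) a * FPer K N (t+1) j ψ a
        = ∑' a : Finset ℤ, ∑' z : Finset ℤ,
            nu K N t z * (stepProb K t z a * (cind K N (t+1) a * FPer K N (t+1) j ψ a)) := by
          apply tsum_congr
          intro a
          rw [nu_succ, mul_comm (cind K N (t+1) a) _, mul_assoc,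
            ← ENNReal.tsum_mul_right]
          apply tsum_congr
          intro z
          ring
      _ = ∑' z : Finset ℤ, ∑' a : Finset ℤ,
            nu K N t z * (stepProb K t z a * (cind K N (t+1) a * FPer K N (t+1) j ψ a)) :=
          ENNReal.tsum_comm
      _ = ∑' z : Finset ℤ, nu K N t z *
            Qop K t (fun b => cind K N (t+1) b * FPer K N (t+1) j ψ b) z := by
          apply tsum_congr
          intro z
          rw [Qop, ← ENNReal.tsum_mul_left]

lemma cind_inactive {K N s : ℕ} (h : ¬ (s % (2*K-1) = 0 ∧ N ≤ s / (2*K-1))) (b : Finset ℤ) :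
    cind K N s b = 1 := by
  have hc : chkProp K N s b := fun h1 h2 => absurd ⟨h1, h2⟩ h
  simp [cind, hc]

lemma cind_active {K N s : ℕ} (h1 : s % (2*K-1) = 0) (h2 : N ≤ s / (2*K-1)) (b : Finset ℤ) :
    cind K N s b = PsiF b := by
  by_cases h : G2 b = 0
  · have hc : chkProp K N s b := fun _ _ => h
    simp [cind, PsiF, hc, h]
  · have hc : ¬ chkProp K N s b := fun hcc => h (hcc h1 h2)
    simp [cind, PsiF, hc, h]

lemma fper_triv {K N : ℕ} : ∀ (j t : ℕ) (ψ : Finset ℤ → ℝ≥0∞),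
    (∀ i, 1 ≤ i → i ≤ j → ¬ ((t+i) % (2*K-1) = 0 ∧ N ≤ (t+i) / (2*K-1))) →
    FPer K N t j ψ = Per K t j ψ := by
  intro j
  induction j with
  | zero => intro t ψ _; rfl
  | succ j ih =>
    intro t ψ h
    rw [FPer_succ, Per_succ]
    have hfun : (fun b => cind K N (t+1) b * FPer K N (t+1) j ψ b) = Per K (t+1) j ψ := by
      ext b
      rw [cind_inactive (by simpa using h 1 (by omega) (by omega)) b, one_mul]
      rw [ih (t+1) ψ (by
        intro i hi1 hi2
        have := h (i+1) (by omega) (by omega)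
        rwa [show t + (i+1) = t+1+i by omega] at this)]
    rw [hfun]

lemma fper_compose {K N : ℕ} : ∀ (i j t : ℕ) (ψ : Finset ℤ → ℝ≥0∞),
    FPer K N t (i+j) ψ = FPer K N t i (FPer K N (t+i) j ψ) := by
  intro i
  induction i with
  | zero => intro j t ψ; rw [Nat.zero_add]; rfl
  | succ i ih =>
    intro j t ψ
    rw [show i+1+j = (i+j)+1 by omega, FPer_succ, FPer_succ,
      show t+(i+1) = t+1+i by omega, ih j (t+1) ψ]

lemma per_snoc {K : ℕ} : ∀ (j t : ℕ) (φ : Finset ℤ → ℝ≥0∞),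
    Per K t (j+1) φ = Per K t j (fun c => Qop K (t+j) φ c) := by
  intro j
  induction j with
  | zero => intro t φ; rfl
  | succ j ih =>
    intro t φ
    rw [Per_succ, ih (t+1) φ, Per_succ, show t+(j+1) = t+1+j by omega]

lemma fper_period' {K N : ℕ} (hK : 2 ≤ K) (t : ℕ)
    (hmod : ∀ i, 1 ≤ i → i ≤ 2*K-2 → (t+i) % (2*K-1) ≠ 0) (ψ : Finset ℤ → ℝ≥0∞) :
    FPer K N t (2*K-1) ψ =
    Per K t (2*K-1) (fun b => cind K N (t+(2*K-1)) b * ψ b) := by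
  obtain ⟨m, hm⟩ : ∃ m, 2*K-1 = m+1 := ⟨2*K-2, by omega⟩
  have hm2 : m = 2*K-2 := by omega
  rw [hm, fper_compose m 1 t ψ]
  rw [fper_triv m t _ (by
    intro i hi1 hi2
    intro hc
    exact hmod i hi1 (by omega) hc.1)]
  rw [per_snoc]
  have h1 : FPer K N (t+m) 1 ψ = Qop K (t+m) (fun b => cind K N (t+(m+1)) b * ψ b) := rfl
  rw [h1]

lemma fper_period {K N n : ℕ} (hK : 2 ≤ K) (ψ : Finset ℤ → ℝ≥0∞) :
    FPer K N (n*(2*K-1)) (2*K-1) ψ =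
    Per K (n*(2*K-1)) (2*K-1)
      (fun b => cind K N (n*(2*K-1)+(2*K-1)) b * ψ b) := by
  apply fper_period' hK
  intro i hi1 hi2
  rw [mod_period (by omega)]
  omega


noncomputable def mass (K N t : ℕ) : ℝ≥0∞ := ∑' b : Finset ℤ, nu K N t b

lemma mass_zero (K N : ℕ) : mass K N 0 = 1 := by
  unfold mass nu
  rw [tsum_eq_single ({0} : Finset ℤ) (by
    intro b hb
    rw [if_neg hb])]
  rw [if_pos rfl]

lemma mass_antitone (K N t : ℕ) : mass K N (t+1) ≤ mass K N t := by
  unfold mass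
  calc ∑' b : Finset ℤ, nu K N (t+1) b
      ≤ ∑' b : Finset ℤ, ∑' a : Finset ℤ, nu K N t a * stepProb K t a b := by
        apply ENNReal.tsum_le_tsum
        intro b
        rw [nu_succ]
        apply mul_le_of_le_one_left' ?_
        unfold cind; split <;> simp
    _ = ∑' a : Finset ℤ, ∑' b : Finset ℤ, nu K N t a * stepProb K t a b := ENNReal.tsum_comm
    _ ≤ ∑' a : Finset ℤ, nu K N t a := by
        apply ENNReal.tsum_le_tsum
        intro a
        rw [ENNReal.tsum_mul_left]
        apply mul_le_of_le_one_right' ?_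
        have := qop_le_one (K := K) (t := t) (φ := fun _ => (1:ℝ≥0∞)) (fun _ => le_rfl) a
        unfold Qop at this
        simpa using this

lemma mass_le_one (K N : ℕ) : ∀ t, mass K N t ≤ 1 := by
  intro t
  induction t with
  | zero => rw [mass_zero]
  | succ t ih => exact le_trans (mass_antitone K N t) ih

lemma mass_step {K N n : ℕ} (hK : 2 ≤ K) (hN : 5*K+7 ≤ N) (hn : N ≤ n) :
    mass K N ((n+2)*(2*K-1)) ≤ (1 - 2⁻¹ * epsP K (n+1)) * mass K N (n*(2*K-1)) := by
  have hMpos : 0 < 2*K-1 := by omega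
  have hsplit : (n+2)*(2*K-1) = n*(2*K-1) + ((2*K-1) + (2*K-1)) := by ring
  have hmass : mass K N ((n+2)*(2*K-1)) =
      ∑' a : Finset ℤ, nu K N (n*(2*K-1)) a *
        FPer K N (n*(2*K-1)) ((2*K-1)+(2*K-1)) (fun _ => (1:ℝ≥0∞)) a := by
    rw [← nu_unroll]
    unfold mass
    rw [hsplit]
    simp
  have hinner : FPer K N (n*(2*K-1)+(2*K-1)) (2*K-1) (fun _ => (1:ℝ≥0∞)) =
      Per K ((n+1)*(2*K-1)) (2*K-1) PsiF := by
    rw [show n*(2*K-1)+(2*K-1) = (n+1)*(2*K-1) by ring]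
    rw [fper_period hK]
    have hfun : (fun c => cind K N ((n+1)*(2*K-1)+(2*K-1)) c * (1:ℝ≥0∞)) = PsiF := by
      ext c
      rw [cind_active (by
          rw [show (n+1)*(2*K-1)+(2*K-1) = ((n+2))*(2*K-1) by ring]
          exact Nat.mul_mod_left _ _)
        (by
          rw [show (n+1)*(2*K-1)+(2*K-1) = ((n+2))*(2*K-1) by ring,
            Nat.mul_div_cancel _ hMpos]
          omega), mul_one]
    rw [← hfun]
  have houter : FPer K N (n*(2*K-1)) ((2*K-1)+(2*K-1)) (fun _ => (1:ℝ≥0∞)) =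
      Per K (n*(2*K-1)) (2*K-1) (PhiF K n) := by
    rw [fper_compose, hinner, fper_period hK]
    have hfun : (fun b => cind K N (n*(2*K-1)+(2*K-1)) b *
        Per K ((n+1)*(2*K-1)) (2*K-1) PsiF b) = PhiF K n := by
      ext b
      rw [cind_active (by
          rw [show n*(2*K-1)+(2*K-1) = ((n+1))*(2*K-1) by ring]
          exact Nat.mul_mod_left _ _)
        (by
          rw [show n*(2*K-1)+(2*K-1) = ((n+1))*(2*K-1) by ring,
            Nat.mul_div_cancel _ hMpos]
          omega)]
      rfl
    rw [hfun]
  rw [hmass, houter]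
  have hδ : 2⁻¹ * epsP K (n+1) ≤ 1 :=
    le_trans (mul_le_of_le_one_left' (by rw [ENNReal.inv_le_one]; exact one_le_two))
      epsP_le_one
  have hpoint : ∀ a : Finset ℤ, nu K N (n*(2*K-1)) a * Per K (n*(2*K-1)) (2*K-1) (PhiF K n) a
      ≤ nu K N (n*(2*K-1)) a * (1 - 2⁻¹ * epsP K (n+1)) := by
    intro a
    by_cases h : nu K N (n*(2*K-1)) a = 0
    · rw [h, zero_mul, zero_mul]
    · apply mul_le_mul_right
      have hcard : a.card = n+1 := by
        rw [nu_card _ a h, cardAt_period hK]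
      have hg2 : G2 a = 0 := nu_G2 hK (by omega) hn h
      have h2p := two_period hK (by omega) a hcard hg2
      exact (ENNReal.cancel_of_ne (ne_top_of_le_ne_top ENNReal.one_ne_top
        hδ)).le_tsub_of_add_le_right h2p
  calc ∑' a : Finset ℤ, nu K N (n*(2*K-1)) a * Per K (n*(2*K-1)) (2*K-1) (PhiF K n) a
      ≤ ∑' a : Finset ℤ, nu K N (n*(2*K-1)) a * (1 - 2⁻¹ * epsP K (n+1)) :=
        ENNReal.tsum_le_tsum hpoint
    _ = (1 - 2⁻¹ * epsP K (n+1)) * mass K N (n*(2*K-1)) := by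
        rw [ENNReal.tsum_mul_right, mul_comm]
        rfl

lemma mass_decay {K N : ℕ} (hK : 2 ≤ K) (hN : 5*K+7 ≤ N) : ∀ (J : ℕ),
    mass K N ((N + 2*J)*(2*K-1)) ≤
      ∏ j ∈ Finset.range J, (1 - 2⁻¹ * epsP K (N+2*j+1)) := by
  intro J
  induction J with
  | zero =>
    simpa using mass_le_one K N (N*(2*K-1))
  | succ J ih =>
    rw [Finset.prod_range_succ]
    calc mass K N ((N + 2*(J+1))*(2*K-1))
        ≤ (1 - 2⁻¹ * epsP K ((N+2*J)+1)) * mass K N ((N+2*J)*(2*K-1)) := by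
          rw [show N + 2*(J+1) = (N+2*J)+2 by omega]
          exact mass_step hK hN (by omega)
      _ ≤ (1 - 2⁻¹ * epsP K (N+2*J+1)) * ∏ j ∈ Finset.range J, (1 - 2⁻¹ * epsP K (N+2*j+1)) :=
          mul_le_mul_right ih _
      _ = (∏ j ∈ Finset.range J, (1 - 2⁻¹ * epsP K (N+2*j+1))) *
            (1 - 2⁻¹ * epsP K (N+2*J+1)) := mul_comm _ _


/-! ### the product tends to zero -/

noncomputable def eR (K N : ℕ) (j : ℕ) : ℝ :=
  (2:ℝ)⁻¹^(2*K+1) * (((N+2*j+1+2*K+2 : ℕ)):ℝ)⁻¹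

lemma eR_nonneg (K N j : ℕ) : 0 ≤ eR K N j := by
  unfold eR
  positivity

lemma delta_eq_ofReal (K N j : ℕ) :
    (2⁻¹:ℝ≥0∞) * epsP K (N+2*j+1) = ENNReal.ofReal (eR K N j) := by
  unfold epsP eR
  have h2 : (2⁻¹:ℝ≥0∞) = ENNReal.ofReal ((2:ℝ)⁻¹) := by
    rw [ENNReal.ofReal_inv_of_pos (by norm_num)]
    norm_num
  have hm : (((N+2*j+1+2*K+2 : ℕ)):ℝ≥0∞)⁻¹ =
      ENNReal.ofReal ((((N+2*j+1+2*K+2 : ℕ)):ℝ)⁻¹) := by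
    rw [ENNReal.ofReal_inv_of_pos (by positivity)]
    rw [ENNReal.ofReal_natCast]
  rw [h2, hm, ← ENNReal.ofReal_pow (by norm_num), ← ENNReal.ofReal_mul (by positivity),
    ← ENNReal.ofReal_mul (by positivity)]
  congr 1
  rw [pow_succ]
  ring

lemma one_sub_delta_le (K N j : ℕ) :
    (1:ℝ≥0∞) - 2⁻¹ * epsP K (N+2*j+1) ≤ ENNReal.ofReal (Real.exp (-(eR K N j))) := by
  rw [delta_eq_ofReal]
  have h1 : (1:ℝ≥0∞) = ENNReal.ofReal (1:ℝ) := by norm_num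
  rw [h1, ← ENNReal.ofReal_sub _ (eR_nonneg K N j)]
  apply ENNReal.ofReal_le_ofReal
  have := Real.add_one_le_exp (-(eR K N j))
  linarith

lemma prod_le_exp (K N : ℕ) : ∀ J,
    (∏ j ∈ Finset.range J, ((1:ℝ≥0∞) - 2⁻¹ * epsP K (N+2*j+1))) ≤
      ENNReal.ofReal (Real.exp (-(∑ j ∈ Finset.range J, eR K N j))) := by
  intro J
  induction J with
  | zero => simp
  | succ J ih =>
    rw [Finset.prod_range_succ, Finset.sum_range_succ, neg_add, Real.exp_add,
      ENNReal.ofReal_mul (by positivity)]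
    exact mul_le_mul' ih (one_sub_delta_le K N J)

lemma sum_eR_tendsto (K N : ℕ) :
    Tendsto (fun J => ∑ j ∈ Finset.range J, eR K N j) atTop atTop := by
  set c : ℝ := (2:ℝ)⁻¹^(2*K+1) * (((N+2*K+4 : ℕ)):ℝ)⁻¹ with hc
  have hcpos : 0 < c := by rw [hc]; positivity
  have hterm : ∀ j : ℕ, c * (1/(j+1)) ≤ eR K N j := by
    intro j
    rw [hc]
    unfold eR
    rw [mul_assoc]
    apply mul_le_mul_of_nonneg_left ?_ (by positivity)
    have hnat : (N+2*j+1+2*K+2) ≤ (N+2*K+4)*(j+1) := by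
      have h1 : 2*j ≤ (N+2*K+4)*j := Nat.mul_le_mul_right j (by omega)
      have hexp : (N+2*K+4)*(j+1) = (N+2*K+4)*j + (N+2*K+4) := by ring
      omega
    have hpos : (0:ℝ) < ((N+2*j+1+2*K+2 : ℕ):ℝ) := by positivity
    calc (((N+2*K+4 : ℕ)):ℝ)⁻¹ * (1/((j:ℝ)+1))
        = ((((N+2*K+4 : ℕ)):ℝ) * ((j:ℝ)+1))⁻¹ := by
          rw [one_div, mul_inv]
      _ ≤ (((N+2*j+1+2*K+2 : ℕ)):ℝ)⁻¹ := by
          apply inv_anti₀ hpos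
          calc (((N+2*j+1+2*K+2 : ℕ)):ℝ) ≤ (((N+2*K+4)*(j+1) : ℕ):ℝ) := by
                exact_mod_cast hnat
            _ = (((N+2*K+4 : ℕ)):ℝ) * ((j:ℝ)+1) := by push_cast; ring
  have hsum : Tendsto (fun J => c * ∑ j ∈ Finset.range J, (1/((j:ℝ)+1))) atTop atTop :=
    (Real.tendsto_sum_range_one_div_nat_succ_atTop).const_mul_atTop hcpos
  apply tendsto_atTop_mono ?_ hsum
  intro J
  rw [Finset.mul_sum]
  exact Finset.sum_le_sum (fun j _ => hterm j)

lemma mass_tendsto_zero {K N : ℕ} (hK : 2 ≤ K) (hN : 5*K+7 ≤ N) :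
    Tendsto (fun J => mass K N ((N+2*J)*(2*K-1))) atTop (nhds 0) := by
  have hub : ∀ J, mass K N ((N+2*J)*(2*K-1)) ≤
      ENNReal.ofReal (Real.exp (-(∑ j ∈ Finset.range J, eR K N j))) :=
    fun J => le_trans (mass_decay hK hN J) (prod_le_exp K N J)
  have h1 : Tendsto (fun J => -(∑ j ∈ Finset.range J, eR K N j)) atTop atBot :=
    tendsto_neg_atTop_atBot.comp (sum_eR_tendsto K N)
  have h2 : Tendsto (fun J => Real.exp (-(∑ j ∈ Finset.range J, eR K N j))) atTop (nhds 0) :=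
    Real.tendsto_exp_atBot.comp h1
  have h3 : Tendsto (fun J => ENNReal.ofReal (Real.exp (-(∑ j ∈ Finset.range J, eR K N j))))
      atTop (nhds 0) := by
    have := ENNReal.tendsto_ofReal h2
    rwa [ENNReal.ofReal_zero] at this
  exact tendsto_of_tendsto_of_tendsto_of_le_of_le tendsto_const_nhds h3
    (fun J => zero_le) hub


/-! ### measure-theoretic bridge -/

section Bridge

variable {Ω : Type*} [MeasurableSpace Ω] (P : Measure Ω) [IsProbabilityMeasure P]
  (X : ℕ → Ω → Finset ℤ) (K N : ℕ)

def Cyl (g : ℕ → Finset ℤ) (T : ℕ) : Set Ω := ⋂ s ∈ Finset.range (T+1), {ω | X s ω = g s}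

def Echk (T : ℕ) : Set Ω := ⋂ s ∈ Finset.range (T+1), {ω | chkProp K N s (X s ω)}

lemma meas_pred (hmeas : ∀ t b, MeasurableSet {ω | X t ω = b})
    (p : Finset ℤ → Prop) (s : ℕ) : MeasurableSet {ω | p (X s ω)} := by
  have : {ω | p (X s ω)} = ⋃ (b : Finset ℤ) (_ : p b), {ω | X s ω = b} := by
    ext ω
    simp only [Set.mem_setOf_eq, Set.mem_iUnion]
    constructor
    · intro h; exact ⟨X s ω, h, rfl⟩
    · rintro ⟨b, hb, he⟩; rw [he]; exact hb
  rw [this]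
  exact MeasurableSet.iUnion (fun b => MeasurableSet.iUnion (fun _ => hmeas s b))

lemma meas_cyl (hmeas : ∀ t b, MeasurableSet {ω | X t ω = b})
    (g : ℕ → Finset ℤ) (T : ℕ) : MeasurableSet (Cyl X g T) :=
  MeasurableSet.biInter (Set.to_countable _) (fun s _ => hmeas s (g s))

lemma meas_echk (hmeas : ∀ t b, MeasurableSet {ω | X t ω = b}) (T : ℕ) :
    MeasurableSet (Echk X K N T) :=
  MeasurableSet.biInter (Set.to_countable _) (fun s _ => meas_pred X hmeas _ s)

/-- partition an event according to the value of `X T` -/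
lemma partition_sum (hmeas : ∀ t b, MeasurableSet {ω | X t ω = b})
    (S : Set Ω) (hS : MeasurableSet S) (T : ℕ) :
    P S = ∑' b : Finset ℤ, P (S ∩ {ω | X T ω = b}) := by
  have hcover : S = ⋃ b : Finset ℤ, (S ∩ {ω | X T ω = b}) := by
    ext ω
    simp only [Set.mem_iUnion, Set.mem_inter_iff, Set.mem_setOf_eq]
    constructor
    · intro h; exact ⟨X T ω, h, rfl⟩
    · rintro ⟨b, h, _⟩; exact h
  conv_lhs => rw [hcover]
  apply measure_iUnion ?_ (fun b => hS.inter (hmeas T b))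
  intro b b' hbb
  simp only [Function.onFun, Set.disjoint_left]
  rintro ω ⟨_, h1⟩ ⟨_, h2⟩
  exact hbb (h1 ▸ h2 ▸ rfl)

/-- the Markov property for past events -/
lemma markov_step (hmeas : ∀ t b, MeasurableSet {ω | X t ω = b})
    (hstep : ∀ (f : ℕ → Finset ℤ) (t : ℕ),
      P (⋂ s ∈ Finset.range (t + 2), {ω | X s ω = f s}) =
        P (⋂ s ∈ Finset.range (t + 1), {ω | X s ω = f s}) *
          stepProb K t (f t) (f (t + 1))) (t : ℕ) (a b : Finset ℤ) :
    P ((Echk X K N t ∩ {ω | X t ω = a}) ∩ {ω | X (t+1) ω = b}) =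
    P (Echk X K N t ∩ {ω | X t ω = a}) * stepProb K t a b := by
  classical
  set A : Set (ℕ → Finset ℤ) := {g | (∀ s, s ≤ t → chkProp K N s (g s)) ∧ g t = a ∧
    ∀ s, t < s → g s = (∅ : Finset ℤ)} with hA
  have hAcnt : Countable ↥A := by
    apply Function.Injective.countable
      (f := fun (g : ↥A) => (fun i : Fin (t+1) => (g : ℕ → Finset ℤ) i))
    intro g g' he
    ext1
    funext s
    by_cases hs : s ≤ t
    · have := congrFun he ⟨s, by omega⟩
      simpa using this
    · rw [g.2.2.2 s (by omega), g'.2.2.2 s (by omega)]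
  have hcover : Echk X K N t ∩ {ω | X t ω = a} = ⋃ (g : ↥A), Cyl X (g : ℕ → Finset ℤ) t := by
    ext ω
    simp only [Set.mem_inter_iff, Set.mem_iUnion, Set.mem_setOf_eq]
    constructor
    · rintro ⟨hchk, hXa⟩
      refine ⟨⟨fun s => if s ≤ t then X s ω else ∅, ?_, ?_, ?_⟩, ?_⟩
      · intro s hs
        dsimp only
        rw [if_pos hs]
        have : ω ∈ ⋂ s ∈ Finset.range (t+1), {ω | chkProp K N s (X s ω)} := hchk
        simp only [Set.mem_iInter, Set.mem_setOf_eq] at this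
        exact this s (Finset.mem_range.2 (by omega))
      · show (if t ≤ t then X t ω else ∅) = a
        rw [if_pos le_rfl]; exact hXa
      · intro s hs
        show (if s ≤ t then X s ω else ∅) = ∅
        rw [if_neg (by omega)]
      · simp only [Cyl, Set.mem_iInter, Set.mem_setOf_eq]
        intro s hs
        rw [Finset.mem_range] at hs
        show X s ω = (if s ≤ t then X s ω else ∅)
        rw [if_pos (by omega : s ≤ t)]
    · rintro ⟨g, hg⟩
      simp only [Cyl, Set.mem_iInter, Set.mem_setOf_eq] at hg
      have hXg : ∀ s, s ≤ t → X s ω = (g : ℕ → Finset ℤ) s :=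
        fun s hs => hg s (Finset.mem_range.2 (by omega))
      constructor
      · simp only [Echk, Set.mem_iInter, Set.mem_setOf_eq]
        intro s hs
        rw [Finset.mem_range] at hs
        rw [hXg s (by omega)]
        exact g.2.1 s (by omega)
      · rw [hXg t le_rfl]; exact g.2.2.1
  have hdisj : Pairwise (Function.onFun Disjoint (fun (g : ↥A) => Cyl X (g : ℕ → Finset ℤ) t)) := by
    intro g g' hgg
    simp only [Function.onFun, Set.disjoint_left]
    intro ω h1 h2
    apply hgg
    simp only [Cyl, Set.mem_iInter, Set.mem_setOf_eq] at h1 h2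
    ext1
    funext s
    by_cases hs : s ≤ t
    · rw [← h1 s (Finset.mem_range.2 (by omega)), ← h2 s (Finset.mem_range.2 (by omega))]
    · rw [g.2.2.2 s (by omega), g'.2.2.2 s (by omega)]
  have hcyl_step : ∀ (g : ↥A),
      P (Cyl X (g : ℕ → Finset ℤ) t ∩ {ω | X (t+1) ω = b}) =
      P (Cyl X (g : ℕ → Finset ℤ) t) * stepProb K t a b := by
    intro g
    set g' : ℕ → Finset ℤ := fun s => if s ≤ t then (g : ℕ → Finset ℤ) s else b with hg'
    have hgt : g' t = a := by
      show (if t ≤ t then (g : ℕ → Finset ℤ) t else b) = a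
      rw [if_pos le_rfl]; exact g.2.2.1
    have hgt1 : g' (t+1) = b := by
      show (if t+1 ≤ t then (g : ℕ → Finset ℤ) (t+1) else b) = b
      rw [if_neg (by omega)]
    have hcyleq : Cyl X (g : ℕ → Finset ℤ) t = Cyl X g' t := by
      unfold Cyl
      apply Set.iInter_congr
      intro s
      apply Set.iInter_congr
      intro hs
      rw [Finset.mem_range] at hs
      rw [hg']
      simp only [if_pos (by omega : s ≤ t)]
    have hext : Cyl X g' t ∩ {ω | X (t+1) ω = b} =
        ⋂ s ∈ Finset.range (t+2), {ω | X s ω = g' s} := by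
      rw [show t+2 = (t+1)+1 by omega, Finset.range_add_one, Finset.set_biInter_insert]
      rw [Set.inter_comm]
      congr 1
      rw [hgt1]
    have := hstep g' t
    rw [← hext] at this
    rw [hgt, hgt1] at this
    rw [hcyleq, this]
    rfl
  calc P ((Echk X K N t ∩ {ω | X t ω = a}) ∩ {ω | X (t+1) ω = b})
      = P (⋃ (g : ↥A), (Cyl X (g : ℕ → Finset ℤ) t ∩ {ω | X (t+1) ω = b})) := by
        rw [hcover, Set.iUnion_inter]
    _ = ∑' (g : ↥A), P (Cyl X (g : ℕ → Finset ℤ) t ∩ {ω | X (t+1) ω = b}) := by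
        apply measure_iUnion
        · intro g g' hgg
          have := hdisj hgg
          simp only [Function.onFun] at this ⊢
          exact Disjoint.mono (Set.inter_subset_left) (Set.inter_subset_left) this
        · exact fun g => (meas_cyl X hmeas _ t).inter (hmeas (t+1) b)
    _ = ∑' (g : ↥A), P (Cyl X (g : ℕ → Finset ℤ) t) * stepProb K t a b :=
        tsum_congr (fun g => hcyl_step g)
    _ = (∑' (g : ↥A), P (Cyl X (g : ℕ → Finset ℤ) t)) * stepProb K t a b :=
        ENNReal.tsum_mul_right
    _ = P (Echk X K N t ∩ {ω | X t ω = a}) * stepProb K t a b := by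
        rw [hcover, measure_iUnion hdisj (fun g => meas_cyl X hmeas _ t)]

lemma bridge (hmeas : ∀ t b, MeasurableSet {ω | X t ω = b})
    (h0 : ∀ ω, X 0 ω = ({0} : Finset ℤ))
    (hstep : ∀ (f : ℕ → Finset ℤ) (t : ℕ),
      P (⋂ s ∈ Finset.range (t + 2), {ω | X s ω = f s}) =
        P (⋂ s ∈ Finset.range (t + 1), {ω | X s ω = f s}) *
          stepProb K t (f t) (f (t + 1)))
    (hN1 : 1 ≤ N) :
    ∀ (t : ℕ) (b : Finset ℤ), P (Echk X K N t ∩ {ω | X t ω = b}) = nu K N t b := by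
  intro t
  induction t with
  | zero =>
    intro b
    have hE0 : Echk X K N 0 = Set.univ := by
      unfold Echk
      ext ω
      simp only [Set.mem_iInter, Set.mem_setOf_eq, Set.mem_univ, iff_true]
      intro s hs
      rw [Finset.mem_range] at hs
      intro _ h2
      rw [show s = 0 by omega, Nat.zero_div] at h2
      omega
    rw [hE0, Set.univ_inter]
    by_cases hb : b = ({0} : Finset ℤ)
    · have : {ω | X 0 ω = b} = Set.univ := by
        ext ω
        simp [h0 ω, hb]
      rw [this]
      simp only [measure_univ]
      unfold nu
      rw [if_pos hb]
    · have : {ω | X 0 ω = b} = ∅ := by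
        ext ω
        simp only [Set.mem_setOf_eq, Set.mem_empty_iff_false, iff_false]
        rw [h0 ω]
        exact fun h => hb h.symm
      rw [this]
      simp only [measure_empty]
      unfold nu
      rw [if_neg hb]
  | succ t ih =>
    intro b
    have hEsucc : Echk X K N (t+1) =
        Echk X K N t ∩ {ω | chkProp K N (t+1) (X (t+1) ω)} := by
      unfold Echk
      rw [show t+1+1 = (t+1)+1 by rfl, Finset.range_add_one, Finset.set_biInter_insert,
        Set.inter_comm]
    by_cases hchk : chkProp K N (t+1) b
    · have hset : Echk X K N (t+1) ∩ {ω | X (t+1) ω = b} =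
          Echk X K N t ∩ {ω | X (t+1) ω = b} := by
        rw [hEsucc]
        ext ω
        simp only [Set.mem_inter_iff, Set.mem_setOf_eq]
        constructor
        · rintro ⟨⟨h1, _⟩, h3⟩; exact ⟨h1, h3⟩
        · rintro ⟨h1, h3⟩
          exact ⟨⟨h1, by rw [h3]; exact hchk⟩, h3⟩
      rw [hset]
      have hpart := partition_sum P X hmeas (Echk X K N t ∩ {ω | X (t+1) ω = b})
        ((meas_echk X K N hmeas t).inter (hmeas (t+1) b)) t
      rw [hpart]
      have hterm : ∀ a : Finset ℤ,
          P ((Echk X K N t ∩ {ω | X (t+1) ω = b}) ∩ {ω | X t ω = a}) =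
          nu K N t a * stepProb K t a b := by
        intro a
        rw [Set.inter_right_comm]
        rw [markov_step P X K N hmeas hstep t a b, ih a]
      rw [tsum_congr hterm]
      rw [nu_succ]
      unfold cind
      rw [if_pos hchk, one_mul]
    · have hset : Echk X K N (t+1) ∩ {ω | X (t+1) ω = b} = ∅ := by
        rw [hEsucc]
        ext ω
        simp only [Set.mem_inter_iff, Set.mem_setOf_eq, Set.mem_empty_iff_false, iff_false]
        rintro ⟨⟨_, h2⟩, h3⟩
        rw [h3] at h2
        exact hchk h2
      rw [hset]
      simp only [measure_empty]
      rw [nu_succ]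
      unfold cind
      rw [if_neg hchk, zero_mul]

lemma echk_mass (hmeas : ∀ t b, MeasurableSet {ω | X t ω = b})
    (h0 : ∀ ω, X 0 ω = ({0} : Finset ℤ))
    (hstep : ∀ (f : ℕ → Finset ℤ) (t : ℕ),
      P (⋂ s ∈ Finset.range (t + 2), {ω | X s ω = f s}) =
        P (⋂ s ∈ Finset.range (t + 1), {ω | X s ω = f s}) *
          stepProb K t (f t) (f (t + 1)))
    (hN1 : 1 ≤ N) (T : ℕ) :
    P (Echk X K N T) = mass K N T := by
  rw [partition_sum P X hmeas _ (meas_echk X K N hmeas T) T]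
  unfold mass
  exact tsum_congr (fun b => bridge P X K N hmeas h0 hstep hN1 T b)

end Bridge

end ACproof

/-- In the annihilation–creation model with parameter `K ≥ 2` started from `{0}`,
almost surely `G²(A_n) ≥ 1` for infinitely many `n`.  Here `X` is the step-by-step
process (with `2K-1` steps per period) and `A n = X (n·(2K-1))`. -/
theorem G2_ge_one_infinitely_often (K : ℕ) (hK : 2 ≤ K)
    {Ω : Type*} [MeasurableSpace Ω] (P : Measure Ω) [IsProbabilityMeasure P]
    (X : ℕ → Ω → Finset ℤ)
    (hmeas : ∀ t b, MeasurableSet {ω | X t ω = b})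
    (h0 : ∀ ω, X 0 ω = ({0} : Finset ℤ))
    (hstep : ∀ (f : ℕ → Finset ℤ) (t : ℕ),
      P (⋂ s ∈ Finset.range (t + 2), {ω | X s ω = f s}) =
        P (⋂ s ∈ Finset.range (t + 1), {ω | X s ω = f s}) *
          stepProb K t (f t) (f (t + 1))) :
    P {ω | ∃ᶠ n in atTop, 1 ≤ G2 (X (n * (2 * K - 1)) ω)} = 1 := by
  classical
  have hBzero : ∀ N : ℕ, 5*K+7 ≤ N →
      P {ω | ∀ n, N ≤ n → G2 (X (n*(2*K-1)) ω) = 0} = 0 := by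
    intro N hN
    set B := {ω | ∀ n, N ≤ n → G2 (X (n*(2*K-1)) ω) = 0} with hB
    have hsub : ∀ J : ℕ, B ⊆ ACproof.Echk X K N ((N+2*J)*(2*K-1)) := by
      intro J ω hω
      simp only [ACproof.Echk, Set.mem_iInter, Set.mem_setOf_eq]
      intro s hs h1 h2
      have hdvd : (2*K-1) ∣ s := Nat.dvd_of_mod_eq_zero h1
      have hs' : (s/(2*K-1))*(2*K-1) = s := Nat.div_mul_cancel hdvd
      have := hω (s/(2*K-1)) h2
      rwa [hs'] at this
    have hle : ∀ J : ℕ, P B ≤ ACproof.mass K N ((N+2*J)*(2*K-1)) := by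
      intro J
      calc P B ≤ P (ACproof.Echk X K N ((N+2*J)*(2*K-1))) := measure_mono (hsub J)
        _ = _ := ACproof.echk_mass P X K N hmeas h0 hstep (by omega) _
    have hP0 : P B ≤ 0 := ge_of_tendsto' (ACproof.mass_tendsto_zero hK hN) hle
    exact le_antisymm hP0 (zero_le)
  set E := {ω | ∃ᶠ n in atTop, 1 ≤ G2 (X (n * (2 * K - 1)) ω)} with hE
  have hEeq : E = ⋂ (m : ℕ), ⋃ (n : ℕ), ⋃ (_ : m ≤ n), {ω | 1 ≤ G2 (X (n*(2*K-1)) ω)} := by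
    ext ω
    simp only [hE, Set.mem_setOf_eq, Filter.frequently_atTop, Set.mem_iInter, Set.mem_iUnion]
    constructor
    · intro h m; obtain ⟨n, hn, hp⟩ := h m; exact ⟨n, hn, hp⟩
    · intro h m; obtain ⟨n, hn, hp⟩ := h m; exact ⟨n, hn, hp⟩
  have hEmeas : MeasurableSet E := by
    rw [hEeq]
    exact MeasurableSet.iInter (fun m => MeasurableSet.iUnion (fun n =>
      MeasurableSet.iUnion (fun _ => ACproof.meas_pred X hmeas (fun b => 1 ≤ G2 b) _)))
  have hcompl : Eᶜ = ⋃ (N : ℕ), {ω | ∀ n, N ≤ n → G2 (X (n*(2*K-1)) ω) = 0} := by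
    ext ω
    simp only [Set.mem_compl_iff, hE, Set.mem_setOf_eq, Set.mem_iUnion]
    rw [Filter.not_frequently, Filter.eventually_atTop]
    constructor
    · rintro ⟨N, hN⟩
      exact ⟨N, fun n hn => by have := hN n hn; omega⟩
    · rintro ⟨N, hN⟩
      exact ⟨N, fun n hn => by have := hN n hn; omega⟩
  have hc0 : P Eᶜ = 0 := by
    rw [hcompl]
    apply measure_iUnion_null
    intro N
    have hsub2 : {ω | ∀ n, N ≤ n → G2 (X (n*(2*K-1)) ω) = 0} ⊆
        {ω | ∀ n, (max N (5*K+7)) ≤ n → G2 (X (n*(2*K-1)) ω) = 0} := by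
      intro ω hω n hn
      exact hω n (le_trans (le_max_left _ _) hn)
    exact le_antisymm (le_trans (measure_mono hsub2)
      (le_of_eq (hBzero _ (le_max_right _ _)))) (zero_le)
  rw [← prob_compl_eq_zero_iff hEmeas]
  exact hc0
end
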